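/- arXiv:0805.4724 — 5 statements merged into one kernel-verified Lean document; each statement's English description precedes it below -/
import Mathlib

section
/- In the q-deformed Jordan–Schwinger realization, define N_j = x_j ∂_j and E^J_{ij} = (x_i/x_j)[N_j] where [N] = (q^N − q^{−N})/(q − q^{−1}). Then for pairwise distinct i, j, k one has E^J_{ij} E^J_{jk} − q^{±1} E^J_{jk} E^J_{ij} = q^{∓N_j} E^J_{ik}. -/
private lemma key_aux {A : Type*} [Ring A] (lam q q' u u' v : A)
    (_hq : ∀ a, q * a = a * q) (_hq' : ∀ a, q' * a = a * q')
    (hlam : ∀ a, lam * a = a * lam)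
    (h1 : lam * (q - q') = 1) :
    (lam * lam * ((q * u - q' * u') * v) - q * (lam * lam * ((u - u') * v))
      = lam * (u' * v))
    ∧ (lam * lam * ((q * u - q' * u') * v) - q' * (lam * lam * ((u - u') * v))
      = lam * (u * v)) := by
  have hmove : ∀ w : A, q * (lam * lam * w) = lam * lam * (q * w) := by
    intro w
    rw [← mul_assoc, ← mul_assoc, ← hlam q, mul_assoc lam q lam, ← hlam q, ← mul_assoc,
      mul_assoc, mul_assoc]
  have hmove' : ∀ w : A, q' * (lam * lam * w) = lam * lam * (q' * w) := by
    intro w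
    rw [← mul_assoc, ← mul_assoc, ← hlam q', mul_assoc lam q' lam, ← hlam q', ← mul_assoc,
      mul_assoc, mul_assoc]
  have hfin : ∀ w : A, lam * lam * ((q - q') * w) = lam * w := by
    intro w
    calc lam * lam * ((q - q') * w) = lam * ((lam * (q - q')) * w) := by
          rw [mul_assoc, ← mul_assoc lam (q - q') w]
      _ = lam * w := by rw [h1, one_mul]
  constructor
  · rw [hmove, ← mul_sub]
    have : (q * u - q' * u') * v - q * ((u - u') * v) = (q - q') * (u' * v) := by
      noncomm_ring
    rw [this, hfin]
  · rw [hmove', ← mul_sub]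
    have : (q * u - q' * u') * v - q' * ((u - u') * v) = (q - q') * (u * v) := by
      noncomm_ring
    rw [this, hfin]

/-- In the q-deformed Jordan–Schwinger realization `E^J_{ij} = (x_i/x_j)[N_j]`,
for pairwise distinct `i j k`:
`[E^J_{ij}, E^J_{jk}]_{q^{±1}} = q^{∓N_j} E^J_{ik}`.
Here `q^{N_i}` is represented by the unit `qN i`, with
`q^{N_i} x_j = q^{δ_{ij}} x_j q^{N_i}`, and `[N_j] = λ⁻¹ (q^{N_j} − q^{−N_j})`. -/
theorem stmt_2 {A : Type*} [Ring A] (n : ℕ)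
    (q : Aˣ) (lamInv : A)
    (x qN : Fin (n + 1) → Aˣ)
    (hq_central : ∀ a : A, (q : A) * a = a * (q : A))
    (hlam_central : ∀ a : A, lamInv * a = a * lamInv)
    (hlam : lamInv * ((q : A) - ((q⁻¹ : Aˣ) : A)) = 1)
    (hxx : ∀ i j, (x i : A) * (x j : A) = (x j : A) * (x i : A))
    (hNN : ∀ i j, (qN i : A) * (qN j : A) = (qN j : A) * (qN i : A))
    (hNx : ∀ i j, (qN i : A) * (x j : A)
      = (if i = j then (q : A) else 1) * ((x j : A) * (qN i : A)))
    (EJ : Fin (n + 1) → Fin (n + 1) → A)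
    (hEJ : ∀ i j, EJ i j
      = (x i : A) * (((x j)⁻¹ : Aˣ) : A)
          * (lamInv * ((qN j : A) - (((qN j)⁻¹ : Aˣ) : A))))
    (i j k : Fin (n + 1)) (hij : i ≠ j) (hjk : j ≠ k) (hik : i ≠ k) :
    (EJ i j * EJ j k - (q : A) * (EJ j k * EJ i j)
        = (((qN j)⁻¹ : Aˣ) : A) * EJ i k)
    ∧ (EJ i j * EJ j k - ((q⁻¹ : Aˣ) : A) * (EJ j k * EJ i j)
        = (qN j : A) * EJ i k) := by
  set Xi : A := (x i : A) with hXi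
  set Xj : A := (x j : A) with hXj
  set Xk : A := (x k : A) with hXk
  set Xj' : A := (((x j)⁻¹ : Aˣ) : A) with hXj'
  set Xk' : A := (((x k)⁻¹ : Aˣ) : A) with hXk'
  set Qj : A := (qN j : A) with hQj
  set Qk : A := (qN k : A) with hQk
  set Qj' : A := (((qN j)⁻¹ : Aˣ) : A) with hQj'
  set Qk' : A := (((qN k)⁻¹ : Aˣ) : A) with hQk'
  set qq : A := (q : A) with hqq
  set qq' : A := ((q⁻¹ : Aˣ) : A) with hqq'
  have cxx : ∀ a b : Fin (n+1), Commute (x a : A) (x b : A) := hxx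
  have cQx : ∀ a b : Fin (n+1), a ≠ b → Commute (qN a : A) (x b : A) := by
    intro a b h
    have := hNx a b
    rw [if_neg h, one_mul] at this
    exact this
  have cQQ : ∀ a b : Fin (n+1), Commute (qN a : A) (qN b : A) := hNN
  have hq_c : ∀ a : A, Commute qq a := hq_central
  have hq'_c : ∀ a : A, Commute qq' a := fun a => (hq_c a).units_inv_left
  have hlam_c : ∀ a : A, Commute lamInv a := hlam_central
  have hXjXj' : Xj * Xj' = 1 := by rw [hXj, hXj']; exact Units.mul_inv _
  have hXj'Xj : Xj' * Xj = 1 := by rw [hXj, hXj']; exact Units.inv_mul _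
  have hQjQj' : Qj * Qj' = 1 := by rw [hQj, hQj']; exact Units.mul_inv _
  have hQj'Qj : Qj' * Qj = 1 := by rw [hQj, hQj']; exact Units.inv_mul _
  have hQjXj : Qj * Xj = qq * (Xj * Qj) := by
    have := hNx j j; rw [if_pos rfl] at this; exact this
  have hQj'Xj : Qj' * Xj = qq' * (Xj * Qj') := by
    have h1 : Xj * Qj' = Qj' * (qq * (Xj * Qj)) * Qj' := by
      rw [← hQjXj, ← mul_assoc, hQj'Qj, one_mul]
    have h2 : Qj' * (qq * (Xj * Qj)) * Qj' = qq * (Qj' * Xj) := by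
      rw [← mul_assoc Qj' qq, ← (hq_c Qj').eq, mul_assoc qq Qj' (Xj * Qj),
        mul_assoc qq (Qj' * (Xj * Qj)) Qj', ← mul_assoc Qj' Xj Qj,
        mul_assoc (Qj' * Xj) Qj Qj', hQjQj', mul_one]
    have h3 : Xj * Qj' = qq * (Qj' * Xj) := h1.trans h2
    calc Qj' * Xj = qq' * (qq * (Qj' * Xj)) := by
          rw [← mul_assoc, hqq, hqq', Units.inv_mul, one_mul]
      _ = qq' * (Xj * Qj') := by rw [← h3]
  set Dj : A := lamInv * (Qj - Qj') with hDj
  set Dk : A := lamInv * (Qk - Qk') with hDk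
  set Dj2 : A := lamInv * (qq * Qj - qq' * Qj') with hDj2
  have hDjXj : Dj * Xj = Xj * Dj2 := by
    have a1 : qq * (Xj * Qj) = Xj * (qq * Qj) := by
      rw [← mul_assoc, (hq_c Xj).eq, mul_assoc]
    have a2 : qq' * (Xj * Qj') = Xj * (qq' * Qj') := by
      rw [← mul_assoc, (hq'_c Xj).eq, mul_assoc]
    rw [hDj, hDj2, mul_assoc, sub_mul, hQjXj, hQj'Xj, a1, a2, ← mul_sub,
      ← mul_assoc, (hlam_c Xj).eq, mul_assoc]
  have cQkXi : Commute Qk Xi := cQx k i (Ne.symm hik)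
  have cQkXj : Commute Qk Xj := cQx k j (Ne.symm hjk)
  have cDk_Xi : Commute Dk Xi :=
    Commute.mul_left (hlam_c Xi) (Commute.sub_left cQkXi cQkXi.units_inv_left)
  have cDk_Xj' : Commute Dk Xj' :=
    Commute.mul_left (hlam_c Xj')
      ((Commute.sub_left cQkXj cQkXj.units_inv_left).units_inv_right)
  have cQj_Xk' : Commute Qj Xk' := (cQx j k hjk).units_inv_right
  have cQj'_Xk' : Commute Qj' Xk' := ((cQx j k hjk).units_inv_left).units_inv_right
  have cDj2_Xk' : Commute Dj2 Xk' := by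
    refine Commute.mul_left (hlam_c Xk') (Commute.sub_left ?_ ?_)
    · exact Commute.mul_left (hq_c Xk') cQj_Xk'
    · exact Commute.mul_left (hq'_c Xk') cQj'_Xk'
  have cQj'_Xi : Commute Qj' Xi := (cQx j i (Ne.symm hij)).units_inv_left
  have cQj_Xi : Commute Qj Xi := cQx j i (Ne.symm hij)
  have cXkXi : Commute Xk' Xi := (cxx k i).units_inv_left
  have cXjXk' : Commute Xj Xk' := (cxx j k).units_inv_right
  have cXjXi : Commute Xj Xi := cxx j i
  have cDkDj : Commute Dk Dj := by
    refine Commute.mul_left (hlam_c Dj) (Commute.mul_right (hlam_c _).symm ?_)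
    refine Commute.sub_right ?_ ?_ <;> refine Commute.sub_left ?_ ?_
    · exact cQQ k j
    · exact (cQQ k j).units_inv_left
    · exact (cQQ k j).units_inv_right
    · exact ((cQQ k j).units_inv_left).units_inv_right
  have e1 : EJ i j * EJ j k = Xi * Xk' * (Dj2 * Dk) := by
    rw [hEJ, hEJ]
    calc Xi * Xj' * Dj * (Xj * Xk' * Dk)
        = Xi * Xj' * (Dj * Xj) * Xk' * Dk := by simp only [mul_assoc]
      _ = Xi * Xj' * (Xj * Dj2) * Xk' * Dk := by rw [hDjXj]
      _ = Xi * (Xj' * Xj) * (Dj2 * Xk') * Dk := by simp only [mul_assoc]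
      _ = Xi * (Xk' * Dj2) * Dk := by rw [hXj'Xj, mul_one, cDj2_Xk'.eq]
      _ = Xi * Xk' * (Dj2 * Dk) := by simp only [mul_assoc]
  have e2 : EJ j k * EJ i j = Xi * Xk' * (Dj * Dk) := by
    rw [hEJ, hEJ]
    calc Xj * Xk' * Dk * (Xi * Xj' * Dj)
        = Xj * Xk' * (Dk * Xi) * Xj' * Dj := by simp only [mul_assoc]
      _ = Xj * Xk' * (Xi * Dk) * Xj' * Dj := by rw [cDk_Xi.eq]
      _ = Xj * Xk' * Xi * (Dk * Xj') * Dj := by simp only [mul_assoc]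
      _ = Xj * Xk' * Xi * (Xj' * Dk) * Dj := by rw [cDk_Xj'.eq]
      _ = Xj * (Xk' * Xi) * Xj' * (Dk * Dj) := by simp only [mul_assoc]
      _ = Xi * Xk' * (Xj * Xj') * (Dk * Dj) := by
          have hx : Xj * (Xk' * Xi) * Xj' = Xi * Xk' * (Xj * Xj') := by
            rw [cXkXi.eq, ← mul_assoc Xj Xi Xk', cXjXi.eq, mul_assoc Xi Xj Xk',
              cXjXk'.eq, ← mul_assoc Xi Xk' Xj, mul_assoc (Xi * Xk') Xj Xj']
          rw [hx]
      _ = Xi * Xk' * (Dj * Dk) := by rw [hXjXj', mul_one, cDkDj.eq]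
  have eik : EJ i k = Xi * Xk' * Dk := by rw [hEJ]
  obtain ⟨k1, k2⟩ := key_aux lamInv qq qq' Qj Qj' (Qk - Qk')
    hq_central (fun a => (hq'_c a).eq) hlam_central hlam
  have hDj2Dk : Dj2 * Dk = lamInv * lamInv * ((qq * Qj - qq' * Qj') * (Qk - Qk')) := by
    rw [hDj2, hDk, mul_assoc lamInv (qq * Qj - qq' * Qj'),
      ← mul_assoc (qq * Qj - qq' * Qj') lamInv (Qk - Qk'),
      ← (hlam_c (qq * Qj - qq' * Qj')).eq,
      mul_assoc lamInv (qq * Qj - qq' * Qj') (Qk - Qk'), ← mul_assoc lamInv lamInv]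
  have hDjDk : Dj * Dk = lamInv * lamInv * ((Qj - Qj') * (Qk - Qk')) := by
    rw [hDj, hDk, mul_assoc lamInv (Qj - Qj'),
      ← mul_assoc (Qj - Qj') lamInv (Qk - Qk'), ← (hlam_c (Qj - Qj')).eq,
      mul_assoc lamInv (Qj - Qj') (Qk - Qk'), ← mul_assoc lamInv lamInv]
  have cmove : ∀ w v : A, w * (Xi * Xk' * v) = Xi * Xk' * (w * v) →
      True := fun _ _ _ => trivial
  have cq : ∀ w : A, qq * (Xi * Xk' * w) = Xi * Xk' * (qq * w) := by
    intro w
    rw [← mul_assoc, (hq_c (Xi * Xk')).eq, mul_assoc]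
  have cq' : ∀ w : A, qq' * (Xi * Xk' * w) = Xi * Xk' * (qq' * w) := by
    intro w
    rw [← mul_assoc, (hq'_c (Xi * Xk')).eq, mul_assoc]
  have move : ∀ w : A, Commute w Xi → Commute w Xk' →
      Xi * Xk' * (lamInv * (w * (Qk - Qk'))) = w * (Xi * Xk' * Dk) := by
    intro w hwi hwk
    rw [hDk, ← mul_assoc lamInv w, (hlam_c w).eq, mul_assoc w lamInv,
      ← mul_assoc (Xi * Xk') w, mul_assoc Xi Xk' w, ← hwk.eq, ← mul_assoc Xi w Xk',
      ← hwi.eq, mul_assoc w Xi Xk', mul_assoc w (Xi * Xk')]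
  constructor
  · calc EJ i j * EJ j k - qq * (EJ j k * EJ i j)
        = Xi * Xk' * (Dj2 * Dk) - Xi * Xk' * (qq * (Dj * Dk)) := by rw [e1, e2, cq]
      _ = Xi * Xk' * (Dj2 * Dk - qq * (Dj * Dk)) := by rw [mul_sub]
      _ = Xi * Xk' * (lamInv * (Qj' * (Qk - Qk'))) := by rw [hDj2Dk, hDjDk, k1]
      _ = Qj' * EJ i k := by rw [eik]; exact move Qj' cQj'_Xi cQj'_Xk'
  · calc EJ i j * EJ j k - qq' * (EJ j k * EJ i j)
        = Xi * Xk' * (Dj2 * Dk) - Xi * Xk' * (qq' * (Dj * Dk)) := by rw [e1, e2, cq']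
      _ = Xi * Xk' * (Dj2 * Dk - qq' * (Dj * Dk)) := by rw [mul_sub]
      _ = Xi * Xk' * (lamInv * (Qj * (Qk - Qk'))) := by rw [hDj2Dk, hDjDk, k2]
      _ = Qj * EJ i k := by rw [eik]; exact move Qj cQj_Xi cQj_Xk'
end

section
/- Define the q-deformed Cartan–Weyl generators E_{ij} = q^{−(N_{i+1}+⋯+N_{j−1})} E^J_{ij} for i<j and E_{ij} = q^{(N_{i−1}+⋯+N_{j+1})} E^J_{ij} for i>j, where E^J_{ij} = (x_i/x_j)[N_j]. Then for i < j < k the q-commutator identity [E_{ij}, E_{jk}]_q := E_{ij}E_{jk} − q E_{jk}E_{ij} = E_{ik} holds. -/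
/-!
Write `K_j = q^{N_j}`, `[K] = λ (K - K⁻¹)` with `λ = (q - q⁻¹)⁻¹`, and `E_{ij} = u⁻¹ a`,
`E_{jk} = v⁻¹ b` with `u = q^{N_{i+1} + ⋯ + N_{j-1}}`, `v = q^{N_{j+1} + ⋯ + N_{k-1}}`,
`a = x_i x_j⁻¹ [K_j]`, `b = x_j x_k⁻¹ [K_k]`. The prefactors `u⁻¹, v⁻¹` involve no `N_t` with
`t ∈ {i, j, k}`, so they commute with `a` and `b` and pull out of the `q`-commutator. The only
non-commuting pair left is `K_j, x_j`, and `[K_j] x_j = x_j [q K_j]`; hence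
`[a, b]_q = x_i x_k⁻¹ ([q K_j] - q [K_j]) [K_k] = K_j⁻¹ x_i x_k⁻¹ [K_k]`, and the extra `K_j⁻¹` is
exactly the factor by which `u v` falls short of `q^{N_{i+1} + ⋯ + N_{k-1}}`.
-/

theorem Finset.Ioo_eq_insert_union_Ioo {α : Type*} [LinearOrder α] [LocallyFiniteOrder α]
    {a b c : α} (hab : a < b) (hbc : b < c) :
    Finset.Ioo a c = insert b (Finset.Ioo a b ∪ Finset.Ioo b c) := by
  ext t
  simp only [Finset.mem_Ioo, Finset.mem_insert, Finset.mem_union]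
  rcases lt_trichotomy t b with h | rfl | h <;> grind

section InsertProduct

variable {ι M : Type*} [DecidableEq ι] [Monoid M] {f : Finset ι → M} {g : ι → M}

theorem commute_of_insert_mul (h_empty : f ∅ = 1)
    (h_insert : ∀ s t, t ∉ s → f (insert t s) = g t * f s) {y : M} (s : Finset ι)
    (hy : ∀ t ∈ s, Commute (g t) y) : Commute (f s) y := by
  induction s using Finset.induction_on with
  | empty => rw [h_empty]; exact Commute.one_left y
  | insert t s ht ih =>
    rw [h_insert s t ht]
    exact (hy t (Finset.mem_insert_self t s)).mul_left
      (ih fun t' h' => hy t' (Finset.mem_insert_of_mem h'))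

theorem union_of_insert_mul (h_empty : f ∅ = 1)
    (h_insert : ∀ s t, t ∉ s → f (insert t s) = g t * f s) {s s' : Finset ι}
    (h : Disjoint s s') : f (s ∪ s') = f s * f s' := by
  induction s using Finset.induction_on with
  | empty => rw [Finset.empty_union, h_empty, one_mul]
  | insert t s ht ih =>
    rw [Finset.disjoint_insert_left] at h
    rw [Finset.insert_union, h_insert _ _ (by simp [ht, h.1]), ih h.2, h_insert s t ht, mul_assoc]

end InsertProduct

theorem Ioo_of_insert_mul {ι M : Type*} [LinearOrder ι] [LocallyFiniteOrder ι] [Monoid M]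
    {f : Finset ι → M} {g : ι → M} (h_empty : f ∅ = 1)
    (h_insert : ∀ s t, t ∉ s → f (insert t s) = g t * f s) {a b c : ι} (hab : a < b)
    (hbc : b < c) : f (Finset.Ioo a c) = g b * (f (Finset.Ioo a b) * f (Finset.Ioo b c)) := by
  have hdisj : Disjoint (Finset.Ioo a b) (Finset.Ioo b c) := Finset.disjoint_left.2
    fun _ h h' => (Finset.mem_Ioo.1 h).2.asymm (Finset.mem_Ioo.1 h').1
  rw [Finset.Ioo_eq_insert_union_Ioo hab hbc, h_insert _ _ (by simp),
    union_of_insert_mul h_empty h_insert hdisj]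

section QNumber

variable {A : Type*} [Ring A]

/-- With `K = q^N` and `lam = (q - q⁻¹)⁻¹` this is the `q`-number `[N]`. -/
def qNum (lam : A) (K : Aˣ) : A := lam * (K - ↑K⁻¹)

def qCommutator (q a b : A) : A := a * b - q * (b * a)

theorem Commute.qNum_right {w lam : A} {K : Aˣ} (hlam : Commute w lam) (hK : Commute w K) :
    Commute w (qNum lam K) :=
  hlam.mul_right (hK.sub_right hK.units_inv_right)

theorem Commute.mul_units_inv_mul_qNum {w lam : A} {y z K : Aˣ} (hlam : Commute w lam)
    (hy : Commute w y) (hz : Commute w z) (hK : Commute w K) :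
    Commute w (y * ↑z⁻¹ * qNum lam K) :=
  (hy.mul_right hz.units_inv_right).mul_right (hlam.qNum_right hK)

theorem qNum_mul_left_sub {q K : Aˣ} {lam : A} (hqK : Commute (q : A) K)
    (hlam_comm : Commute lam q) (hlam : lam * (q - ↑q⁻¹) = 1) :
    qNum lam (q * K) - q * qNum lam K = ↑K⁻¹ := by
  have hinv : (↑(q * K)⁻¹ : A) = ↑q⁻¹ * ↑K⁻¹ := by
    rw [mul_inv_rev, Units.val_mul, hqK.units_inv_left.units_inv_right.eq]
  rw [qNum, qNum, ← mul_assoc (q : A), ← hlam_comm.eq, mul_assoc, ← mul_sub, hinv,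
    Units.val_mul]
  calc lam * (q * K - ↑q⁻¹ * ↑K⁻¹ - q * (K - ↑K⁻¹)) = lam * (q - ↑q⁻¹) * ↑K⁻¹ := by
        noncomm_ring
    _ = ↑K⁻¹ := by rw [hlam, one_mul]

theorem units_inv_mul_eq_of_mul_eq {q K x : Aˣ} (hqK : Commute (q : A) K)
    (h : (K * x : A) = q * x * K) : (↑K⁻¹ * x : A) = ↑q⁻¹ * x * ↑K⁻¹ := by
  have h' : SemiconjBy (↑K⁻¹ : A) (q * x) x := SemiconjBy.units_inv_symm_left h
  rw [mul_assoc (↑q⁻¹ : A), ← h'.eq, ← mul_assoc, hqK.units_inv_left.units_inv_right.eq,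
    mul_assoc, Units.inv_mul_cancel_left]

theorem qNum_mul_of_mul_eq {q K x : Aˣ} {lam : A} (hqK : Commute (q : A) K)
    (hqx : Commute (q : A) x) (hlam : Commute lam x) (h : (K * x : A) = q * x * K) :
    qNum lam K * x = x * qNum lam (q * K) := by
  rw [qNum, qNum, mul_assoc, sub_mul, h, units_inv_mul_eq_of_mul_eq hqK h, hqx.eq,
    hqx.units_inv_left.eq, mul_assoc, mul_assoc, ← mul_sub, ← mul_assoc, hlam.eq,
    mul_assoc, mul_inv_rev, Units.val_mul, Units.val_mul, hqK.units_inv_left.units_inv_right.eq]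

theorem qCommutator_mul_mul {q a b c d : A} (hq : Commute q (c * d)) (had : Commute a d)
    (hbc : Commute b c) (hcd : Commute c d) :
    qCommutator q (c * a) (d * b) = c * d * qCommutator q a b := by
  rw [qCommutator, qCommutator, mul_sub, mul_assoc c, had.left_comm, mul_assoc d, hbc.left_comm,
    hcd.symm.left_comm, ← mul_assoc c d, ← mul_assoc c d, ← hq.left_comm]

theorem qCommutator_qNum {q xi xj xk Kj Kk : Aˣ} {lam : A} (hq : ∀ a : A, Commute (q : A) a)
    (hlam_comm : ∀ a : A, Commute lam a) (hlam : lam * (q - ↑q⁻¹) = 1)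
    (hxij : Commute (xi : A) xj) (hxik : Commute (xi : A) xk) (hxjk : Commute (xj : A) xk)
    (hKK : Commute (Kj : A) Kk) (hKj_xi : Commute (Kj : A) xi) (hKj_xk : Commute (Kj : A) xk)
    (hKk_xi : Commute (Kk : A) xi) (hKk_xj : Commute (Kk : A) xj)
    (hKj_xj : (Kj * xj : A) = q * xj * Kj) :
    qCommutator (q : A) (xi * ↑xj⁻¹ * qNum lam Kj) (xj * ↑xk⁻¹ * qNum lam Kk)
      = ↑Kj⁻¹ * (xi * ↑xk⁻¹ * qNum lam Kk) := by
  have hxk_qKj : Commute (↑xk⁻¹ : A) (qNum lam (q * Kj)) :=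
    ((hlam_comm _).symm).qNum_right (by
      rw [Units.val_mul]; exact ((hq _).symm.mul_right hKj_xk.symm).units_inv_left)
  have hKk_x : Commute (qNum lam Kk) (xi * ↑xj⁻¹) :=
    (((hlam_comm _).symm.qNum_right hKk_xi.symm).mul_left
      ((hlam_comm _).symm.qNum_right hKk_xj.symm).units_inv_left).symm
  have hKK' : Commute (qNum lam Kk) (qNum lam Kj) :=
    (hlam_comm _).symm.qNum_right ((hlam_comm _).symm.qNum_right hKK).symm
  have hab : xi * ↑xj⁻¹ * qNum lam Kj * (xj * ↑xk⁻¹ * qNum lam Kk)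
      = xi * ↑xk⁻¹ * (qNum lam (q * Kj) * qNum lam Kk) := by
    calc _ = xi * ↑xj⁻¹ * (qNum lam Kj * xj) * ↑xk⁻¹ * qNum lam Kk := by simp only [mul_assoc]
      _ = xi * (↑xj⁻¹ * xj) * (qNum lam (q * Kj) * ↑xk⁻¹) * qNum lam Kk := by
        rw [qNum_mul_of_mul_eq (hq _) (hq _) (hlam_comm _) hKj_xj]; simp only [mul_assoc]
      _ = _ := by rw [Units.inv_mul, mul_one, ← hxk_qKj.eq]; simp only [mul_assoc]
  have hba : xj * ↑xk⁻¹ * qNum lam Kk * (xi * ↑xj⁻¹ * qNum lam Kj)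
      = xi * ↑xk⁻¹ * (qNum lam Kj * qNum lam Kk) := by
    have hx : (xj * ↑xk⁻¹ * (xi * ↑xj⁻¹) : A) = xi * ↑xk⁻¹ := by
      rw [mul_assoc, hxik.symm.units_inv_left.left_comm, ← mul_assoc, ← mul_assoc, ← hxij.eq,
        mul_assoc (xi : A), hxjk.units_inv_right.eq, ← mul_assoc, Units.mul_inv_cancel_right]
    calc _ = xj * ↑xk⁻¹ * (qNum lam Kk * (xi * ↑xj⁻¹)) * qNum lam Kj := by simp only [mul_assoc]
      _ = _ := by rw [hKk_x.eq, ← hKK'.eq, ← hx]; simp only [mul_assoc]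
  rw [qCommutator, hab, hba, (hq _).left_comm, ← mul_sub,
    ← mul_assoc (q : A), ← sub_mul, qNum_mul_left_sub (hq _) (hlam_comm _) hlam, ← mul_assoc,
    ← ((hKj_xi.mul_right hKj_xk.units_inv_right).units_inv_left).eq, mul_assoc]

end QNumber

/-- `qN t` stands for `q^{N_t}`, `qS s` for `q^{∑_{t ∈ s} N_t}` and `lamInv` for `(q - q⁻¹)⁻¹`. -/
theorem stmt_4_general {A : Type*} [Ring A] (n : ℕ)
    (q : Aˣ) (lamInv : A)
    (x qN : Fin (n + 1) → Aˣ)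
    (qS : Finset (Fin (n + 1)) → Aˣ)
    (hq_central : ∀ a : A, (q : A) * a = a * (q : A))
    (hlam_central : ∀ a : A, lamInv * a = a * lamInv)
    (hlam : lamInv * ((q : A) - ((q⁻¹ : Aˣ) : A)) = 1)
    (hxx : ∀ i j, (x i : A) * (x j : A) = (x j : A) * (x i : A))
    (hNN : ∀ i j, (qN i : A) * (qN j : A) = (qN j : A) * (qN i : A))
    (hNx : ∀ i j, (qN i : A) * (x j : A)
      = (if i = j then (q : A) else 1) * ((x j : A) * (qN i : A)))
    (hqS0 : qS ∅ = 1)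
    (hqSi : ∀ (s : Finset (Fin (n + 1))) (t), t ∉ s → qS (insert t s) = qN t * qS s)
    (EJ E : Fin (n + 1) → Fin (n + 1) → A)
    (hEJ : ∀ i j, EJ i j
      = (x i : A) * (((x j)⁻¹ : Aˣ) : A)
          * (lamInv * ((qN j : A) - (((qN j)⁻¹ : Aˣ) : A))))
    (hElt : ∀ i j, i < j →
      E i j = (((qS (Finset.Ioo i j))⁻¹ : Aˣ) : A) * EJ i j)
    (i j k : Fin (n + 1)) (hij : i < j) (hjk : j < k) :
    E i j * E j k - (q : A) * (E j k * E i j) = E i k := by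
  have hlam_comm : ∀ a : A, Commute lamInv a := hlam_central
  have hNx_ne : ∀ {m l}, m ≠ l → Commute (qN m : A) (x l) := fun {m l} h =>
    (hNx m l).trans (by rw [if_neg h, one_mul])
  have hqS_comm : ∀ s m, (∀ t ∈ s, Commute (qN t : A) m) → Commute (qS s : A) m :=
    fun s m => commute_of_insert_mul (f := fun s => (qS s : A)) (g := fun t => (qN t : A))
      (by rw [hqS0, Units.val_one]) (fun s t ht => by rw [hqSi s t ht, Units.val_mul]) s
  have hqS_EJ : ∀ s a b, a ∉ s → b ∉ s → Commute (↑(qS s)⁻¹ : A) (EJ a b) := by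
    intro s a b ha hb
    rw [hEJ]
    exact ((hlam_comm _).symm.mul_units_inv_mul_qNum
      (hqS_comm s _ fun t ht => hNx_ne (ne_of_mem_of_not_mem ht ha))
      (hqS_comm s _ fun t ht => hNx_ne (ne_of_mem_of_not_mem ht hb))
      (hqS_comm s _ fun t _ => hNN t b)).units_inv_left
  set u := qS (Finset.Ioo i j)
  set v := qS (Finset.Ioo j k)
  have huv : Commute u v :=
    Units.ext (hqS_comm _ _ fun t _ => (hqS_comm _ _ fun t' _ => hNN t' t).symm)
  have hEJ_qComm : qCommutator (q : A) (EJ i j) (EJ j k) = ↑(qN j)⁻¹ * EJ i k := by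
    rw [hEJ, hEJ, hEJ]
    exact qCommutator_qNum hq_central hlam_comm hlam (hxx i j) (hxx i k) (hxx j k) (hNN j k)
      (hNx_ne hij.ne') (hNx_ne hjk.ne) (hNx_ne (hij.trans hjk).ne') (hNx_ne hjk.ne')
      ((hNx j j).trans (by rw [if_pos rfl, mul_assoc]))
  calc E i j * E j k - q * (E j k * E i j)
      = qCommutator (q : A) (↑u⁻¹ * EJ i j) (↑v⁻¹ * EJ j k) := by
        rw [hElt i j hij, hElt j k hjk]; rfl
    _ = ↑u⁻¹ * ↑v⁻¹ * (↑(qN j)⁻¹ * EJ i k) := by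
        rw [qCommutator_mul_mul (hq_central _)
          (hqS_EJ _ i j (fun h => (Finset.mem_Ioo.1 h).1.asymm hij) Finset.left_notMem_Ioo).symm
          (hqS_EJ _ j k Finset.right_notMem_Ioo (fun h => (Finset.mem_Ioo.1 h).2.asymm hjk)).symm
          huv.inv_inv.units_val, hEJ_qComm]
    _ = E i k := by
        rw [hElt i k (hij.trans hjk), Ioo_of_insert_mul hqS0 hqSi hij hjk, mul_inv_rev,
          mul_inv_rev, ← huv.inv_inv.eq]
        simp only [Units.val_mul, mul_assoc]

/-- q-deformed Cartan–Weyl Jordan–Schwinger generators: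
`E_{ij} = q^{−(N_{i+1}+⋯+N_{j−1})} E^J_{ij}` for `i<j`,
`E_{ij} = q^{+(N_{i−1}+⋯+N_{j+1})} E^J_{ij}` for `i>j`, with
`E^J_{ij} = (x_i/x_j)[N_j]`. The unit `qS s` represents `q^{∑_{t∈s} N_t}`. -/
theorem stmt_4 {A : Type*} [Ring A] (n : ℕ)
    (q : Aˣ) (lamInv : A)
    (x qN : Fin (n + 1) → Aˣ)
    (qS : Finset (Fin (n + 1)) → Aˣ)
    (hq_central : ∀ a : A, (q : A) * a = a * (q : A))
    (hlam_central : ∀ a : A, lamInv * a = a * lamInv)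
    (hlam : lamInv * ((q : A) - ((q⁻¹ : Aˣ) : A)) = 1)
    (hxx : ∀ i j, (x i : A) * (x j : A) = (x j : A) * (x i : A))
    (hNN : ∀ i j, (qN i : A) * (qN j : A) = (qN j : A) * (qN i : A))
    (hNx : ∀ i j, (qN i : A) * (x j : A)
      = (if i = j then (q : A) else 1) * ((x j : A) * (qN i : A)))
    (hqS0 : qS ∅ = 1)
    (hqSi : ∀ (s : Finset (Fin (n + 1))) (t), t ∉ s → qS (insert t s) = qN t * qS s)
    (EJ E : Fin (n + 1) → Fin (n + 1) → A)
    (hEJ : ∀ i j, EJ i j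
      = (x i : A) * (((x j)⁻¹ : Aˣ) : A)
          * (lamInv * ((qN j : A) - (((qN j)⁻¹ : Aˣ) : A))))
    (hElt : ∀ i j, i < j →
      E i j = (((qS (Finset.Ioo i j))⁻¹ : Aˣ) : A) * EJ i j)
    (hEgt : ∀ i j, j < i →
      E i j = ((qS (Finset.Ioo j i) : Aˣ) : A) * EJ i j)
    (i j k : Fin (n + 1)) (hij : i < j) (hjk : j < k) :
    E i j * E j k - (q : A) * (E j k * E i j) = E i k :=
  stmt_4_general n q lamInv x qN qS hq_central hlam_central hlam hxx hNN hNx hqS0 hqSi EJ E hEJ hElt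
    i j k hij hjk
end

section
/- With the q-deformed Cartan–Weyl Jordan–Schwinger generators, for i ≠ j one has [E_{ij}, E_{ji}] = [N_i − N_j], where [A] = (q^A − q^{−A})/(q − q^{−1}). -/
/-! Conjugation by the unit `x_j` shifts `q^{N_j}` to `q^{N_j + 1}`, so
`E^J_{ij} E^J_{ji} = [N_j + 1][N_i]`, while the prefactors `q^{∓(N_{i+1}+⋯+N_{j−1})}` commute with
both `E^J`'s and cancel. The recurrence `[N + 1] = q^N + q⁻¹[N]` then reduces the commutator to
`q^{N_j}[N_i] − q^{N_i}[N_j] = [N_i − N_j]`. -/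

section QNumber

variable {A : Type*} [Ring A]

/-- With `L = (q - q⁻¹)⁻¹` and `Q = q ^ N`, this is the q-number `[N]`. -/
def qNumber (L : A) (Q : Aˣ) : A := L * (Q - ↑Q⁻¹)

theorem Commute.qNumber_right {a L : A} {Q : Aˣ} (hL : Commute a L) (hQ : Commute a Q) :
    Commute a (qNumber L Q) :=
  hL.mul_right (hQ.sub_right hQ.units_inv_right)

theorem qNumber_conj {L : A} {y : Aˣ} (hL : Commute L y) (Q : Aˣ) :
    y * qNumber L Q * ↑y⁻¹ = qNumber L (y * Q * y⁻¹) := by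
  simp only [qNumber, mul_inv_rev, inv_inv, Units.val_mul]
  rw [← mul_assoc, ← hL.eq]
  simp only [mul_sub, sub_mul, mul_assoc]

theorem qNumber_q_mul {L : A} {q : Aˣ} (hL : ∀ a : A, Commute L a) (hlam : L * (q - ↑q⁻¹) = 1)
    {Q : Aˣ} (hqQ : Commute (q : A) Q) :
    qNumber L (q * Q) = Q + q⁻¹ * qNumber L Q := by
  have hQq : (↑(q * Q)⁻¹ : A) = ↑q⁻¹ * ↑Q⁻¹ := by
    rw [mul_inv_rev, Units.val_mul, (hqQ.units_inv_left.units_inv_right).eq]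
  calc qNumber L (q * Q) = L * (q - ↑q⁻¹) * Q + L * (↑q⁻¹ * (Q - ↑Q⁻¹)) := by
        rw [qNumber, hQq, Units.val_mul]; noncomm_ring
    _ = Q + q⁻¹ * qNumber L Q := by rw [hlam, one_mul, qNumber, (hL _).left_comm]

theorem mul_qNumber_sub_mul_qNumber {L : A} (hL : ∀ a : A, Commute L a) {U V : Aˣ}
    (hUV : Commute (U : A) V) :
    V * qNumber L U - U * qNumber L V = qNumber L (U * V⁻¹) := by
  simp only [qNumber, ← (hL _).left_comm, ← mul_sub, mul_inv_rev, inv_inv, Units.val_mul]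
  congr 1
  rw [mul_sub, mul_sub, ← hUV.eq]
  abel

theorem qNumber_q_mul_mul_qNumber_sub {L : A} {q : Aˣ} (hL : ∀ a : A, Commute L a)
    (hq : ∀ a : A, Commute (q : A) a) (hlam : L * (q - ↑q⁻¹) = 1) {U V : Aˣ}
    (hUV : Commute (U : A) V) :
    qNumber L (q * V) * qNumber L U - qNumber L (q * U) * qNumber L V
      = qNumber L (U * V⁻¹) := by
  have hUV' : Commute (qNumber L U) (qNumber L V) :=
    (hL _).symm.qNumber_right ((hL _).symm.qNumber_right hUV.symm).symm
  rw [qNumber_q_mul hL hlam (hq V), qNumber_q_mul hL hlam (hq U), add_mul, add_mul, mul_assoc,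
    mul_assoc, hUV'.eq, ← mul_qNumber_sub_mul_qNumber hL hUV]
  abel

theorem jordanSchwinger_mul {L : A} {q : Aˣ} (hL : ∀ a : A, Commute L a)
    (hq : ∀ a : A, Commute (q : A) a) {xa xb Qa Qb : Aˣ} (hxaQb : Commute (xa : A) Qb)
    (hQbxb : (Qb : A) * xb = q * (xb * Qb)) :
    xa * ↑xb⁻¹ * qNumber L Qb * (xb * ↑xa⁻¹ * qNumber L Qa)
      = qNumber L (q * Qb) * qNumber L Qa := by
  have hshift : xb⁻¹ * Qb * xb = q * Qb := Units.ext <| by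
    push_cast
    rw [mul_assoc, hQbxb, (hq _).left_comm, Units.inv_mul_cancel_left]
  have hconj : xa * xb⁻¹ * Qb * (xa * xb⁻¹)⁻¹ = q * Qb := by
    rw [show xa * xb⁻¹ * Qb * (xa * xb⁻¹)⁻¹ = xa * (xb⁻¹ * Qb * xb) * xa⁻¹ by group, hshift]
    refine Commute.mul_inv_cancel (Commute.units_of_val ?_)
    push_cast
    exact (hq _).symm.mul_right hxaQb
  calc xa * ↑xb⁻¹ * qNumber L Qb * (xb * ↑xa⁻¹ * qNumber L Qa)
      = ↑(xa * xb⁻¹) * qNumber L Qb * ↑(xa * xb⁻¹)⁻¹ * qNumber L Qa := by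
        simp only [mul_inv_rev, inv_inv, Units.val_mul, mul_assoc]
    _ = qNumber L (q * Qb) * qNumber L Qa := by rw [qNumber_conj (hL _), hconj]

theorem Units.inv_mul_mul_mul_cancel {u : Aˣ} {a : A} (h : Commute (u : A) a) (b : A) :
    ↑u⁻¹ * a * (u * b) = a * b := by
  rw [mul_assoc, ← mul_assoc a, ← h.eq, mul_assoc, Units.inv_mul_cancel_left]

theorem Units.mul_mul_inv_mul_cancel {u : Aˣ} {a : A} (h : Commute (u : A) a) (b : A) :
    u * a * (↑u⁻¹ * b) = a * b := by
  simpa using Units.inv_mul_mul_mul_cancel h.units_inv_left b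

theorem commute_of_insert_eq_mul {ι : Type*} [DecidableEq ι] {f : Finset ι → Aˣ} {g : ι → Aˣ}
    (hf₀ : f ∅ = 1) (hf : ∀ s t, t ∉ s → f (insert t s) = g t * f s) {a : A} (s : Finset ι)
    (hs : ∀ t ∈ s, Commute (g t : A) a) : Commute (f s : A) a := by
  induction s using Finset.induction_on with
  | empty => simp [hf₀]
  | insert t s ht ih =>
    rw [hf s t ht, Units.val_mul]
    exact (hs t (s.mem_insert_self t)).mul_left (ih fun t' ht' ↦ hs t' (s.mem_insert_of_mem ht'))

end QNumber

theorem stmt_6_general {A : Type*} [Ring A] (n : ℕ)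
    (q : Aˣ) (lamInv : A)
    (x qN : Fin (n + 1) → Aˣ)
    (qS : Finset (Fin (n + 1)) → Aˣ)
    (hq_central : ∀ a : A, (q : A) * a = a * (q : A))
    (hlam_central : ∀ a : A, lamInv * a = a * lamInv)
    (hlam : lamInv * ((q : A) - ((q⁻¹ : Aˣ) : A)) = 1)
    (hNN : ∀ i j, (qN i : A) * (qN j : A) = (qN j : A) * (qN i : A))
    (hNx : ∀ i j, (qN i : A) * (x j : A)
      = (if i = j then (q : A) else 1) * ((x j : A) * (qN i : A)))
    (hqS0 : qS ∅ = 1)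
    (hqSi : ∀ (s : Finset (Fin (n + 1))) (t), t ∉ s → qS (insert t s) = qN t * qS s)
    (EJ E : Fin (n + 1) → Fin (n + 1) → A)
    (hEJ : ∀ i j, EJ i j
      = (x i : A) * (((x j)⁻¹ : Aˣ) : A)
          * (lamInv * ((qN j : A) - (((qN j)⁻¹ : Aˣ) : A))))
    (hElt : ∀ i j, i < j →
      E i j = (((qS (Finset.Ioo i j))⁻¹ : Aˣ) : A) * EJ i j)
    (hEgt : ∀ i j, j < i →
      E i j = ((qS (Finset.Ioo j i) : Aˣ) : A) * EJ i j)
    (i j : Fin (n + 1)) (hij : i ≠ j) :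
    E i j * E j i - E j i * E i j
      = lamInv * ((qN i : A) * (((qN j)⁻¹ : Aˣ) : A)
          - (qN j : A) * (((qN i)⁻¹ : Aˣ) : A)) := by
  have hEJ' : ∀ a b, EJ a b = x a * ↑(x b)⁻¹ * qNumber lamInv (qN b) := hEJ
  have hL : ∀ a : A, Commute lamInv a := hlam_central
  have hq : ∀ a : A, Commute (q : A) a := hq_central
  have hNx_ne : ∀ a b, a ≠ b → Commute (qN a : A) (x b : A) := fun a b hab ↦ by
    rw [Commute, SemiconjBy, hNx, if_neg hab, one_mul]
  have hEJ_comm : ∀ a b, a ≠ b →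
      EJ a b * EJ b a - EJ b a * EJ a b = qNumber lamInv (qN a * (qN b)⁻¹) := fun a b hab ↦ by
    rw [hEJ', hEJ', jordanSchwinger_mul hL hq (hNx_ne b a hab.symm).symm (by simpa using hNx b b),
      jordanSchwinger_mul hL hq (hNx_ne a b hab).symm (by simpa using hNx a a),
      qNumber_q_mul_mul_qNumber_sub hL hq hlam (hNN a b)]
  have hqS_comm : ∀ s a b, a ∉ s → b ∉ s → Commute (qS s : A) (EJ a b) := fun s a b ha hb ↦
    commute_of_insert_eq_mul hqS0 hqSi s fun t ht ↦ by
      rw [hEJ']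
      exact ((hNx_ne t a (ne_of_mem_of_not_mem ht ha)).mul_right
        (hNx_ne t b (ne_of_mem_of_not_mem ht hb)).units_inv_right).mul_right
        ((hL _).symm.qNumber_right (hNN t b))
  suffices E i j * E j i - E j i * E i j = EJ i j * EJ j i - EJ j i * EJ i j by
    simp [this, hEJ_comm i j hij, qNumber]
  rcases hij.lt_or_gt with h | h
  · rw [hElt i j h, hEgt j i h, Units.inv_mul_mul_mul_cancel (hqS_comm _ i j (by simp) (by simp)),
      Units.mul_mul_inv_mul_cancel (hqS_comm _ j i (by simp) (by simp))]
  · rw [hEgt i j h, hElt j i h, Units.mul_mul_inv_mul_cancel (hqS_comm _ i j (by simp) (by simp)),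
      Units.inv_mul_mul_mul_cancel (hqS_comm _ j i (by simp) (by simp))]

/-- q-deformed Cartan–Weyl Jordan–Schwinger generators:
`E_{ij} = q^{−(N_{i+1}+⋯+N_{j−1})} E^J_{ij}` for `i<j`,
`E_{ij} = q^{+(N_{i−1}+⋯+N_{j+1})} E^J_{ij}` for `i>j`, with
`E^J_{ij} = (x_i/x_j)[N_j]`. The unit `qS s` represents `q^{∑_{t∈s} N_t}`. -/
theorem stmt_6 {A : Type*} [Ring A] (n : ℕ)
    (q : Aˣ) (lamInv : A)
    (x qN : Fin (n + 1) → Aˣ)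
    (qS : Finset (Fin (n + 1)) → Aˣ)
    (hq_central : ∀ a : A, (q : A) * a = a * (q : A))
    (hlam_central : ∀ a : A, lamInv * a = a * lamInv)
    (hlam : lamInv * ((q : A) - ((q⁻¹ : Aˣ) : A)) = 1)
    (hxx : ∀ i j, (x i : A) * (x j : A) = (x j : A) * (x i : A))
    (hNN : ∀ i j, (qN i : A) * (qN j : A) = (qN j : A) * (qN i : A))
    (hNx : ∀ i j, (qN i : A) * (x j : A)
      = (if i = j then (q : A) else 1) * ((x j : A) * (qN i : A)))
    (hqS0 : qS ∅ = 1)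
    (hqSi : ∀ (s : Finset (Fin (n + 1))) (t), t ∉ s → qS (insert t s) = qN t * qS s)
    (EJ E : Fin (n + 1) → Fin (n + 1) → A)
    (hEJ : ∀ i j, EJ i j
      = (x i : A) * (((x j)⁻¹ : Aˣ) : A)
          * (lamInv * ((qN j : A) - (((qN j)⁻¹ : Aˣ) : A))))
    (hElt : ∀ i j, i < j →
      E i j = (((qS (Finset.Ioo i j))⁻¹ : Aˣ) : A) * EJ i j)
    (hEgt : ∀ i j, j < i →
      E i j = ((qS (Finset.Ioo j i) : Aˣ) : A) * EJ i j)
    (i j : Fin (n + 1)) (hij : i ≠ j) :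
    E i j * E j i - E j i * E i j
      = lamInv * ((qN i : A) * (((qN j)⁻¹ : Aˣ) : A)
          - (qN j : A) * (((qN i)⁻¹ : Aˣ) : A)) :=
  stmt_6_general n q lamInv x qN qS hq_central hlam_central hlam hNN hNx hqS0 hqSi EJ E hEJ hElt
    hEgt i j hij
end

section
/- With the q-deformed Cartan–Weyl Jordan–Schwinger generators, for i+1 < j one has the commutator identity [E_{i+1,i}, E_{i,j}] = E_{i+1,j} q^{N_i − N_{i+1}}. -/
section helpers
variable {A : Type*} [Ring A]

/-- move `a` left past `b` (they commute). -/
lemma swap_of_comm {a b : A} (h : a * b = b * a) (c : A) :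
    b * (a * c) = a * (b * c) := by
  rw [← mul_assoc, ← h, mul_assoc]

/-- move `a` left past `b` with a scalar `k`. -/
lemma qswap_of {a b k : A} (h : b * a = k * (a * b)) (c : A) :
    b * (a * c) = k * (a * (b * c)) := by
  rw [← mul_assoc, h, mul_assoc, mul_assoc]

lemma inv_comm_of (u : Aˣ) (a : A) (h : (u : A) * a = a * u) :
    (↑u⁻¹ : A) * a = a * ↑u⁻¹ := by
  have := congrArg (fun z => (↑u⁻¹ : A) * z * ↑u⁻¹) h
  simpa [mul_assoc] using this.symm

lemma inv_qcomm_of (u k : Aˣ) (a : A)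
    (hk : ∀ b : A, (k : A) * b = b * k)
    (h : (u : A) * a = (k : A) * (a * u)) :
    (↑u⁻¹ : A) * a = (↑k⁻¹ : A) * (a * ↑u⁻¹) := by
  have h2 : a * (u : A) = (↑k⁻¹ : A) * ((u : A) * a) := by
    rw [h, ← mul_assoc, Units.inv_mul, one_mul]
  calc (↑u⁻¹ : A) * a = ↑u⁻¹ * (a * ↑u) * ↑u⁻¹ := by
        rw [mul_assoc, mul_assoc, Units.mul_inv, mul_one]
    _ = ↑u⁻¹ * (↑k⁻¹ * (↑u * a)) * ↑u⁻¹ := by rw [h2]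
    _ = (↑k⁻¹ : A) * (a * ↑u⁻¹) := by
        rw [swap_of_comm (inv_comm_of k (↑u⁻¹) (hk _)) (↑u * a),
          ← mul_assoc (↑u⁻¹ : A) (↑u : A) a, Units.inv_mul, one_mul, mul_assoc]

lemma qS_comm_aux {n : ℕ} (qN : Fin (n + 1) → Aˣ) (qS : Finset (Fin (n + 1)) → Aˣ)
    (hqS0 : qS ∅ = 1)
    (hqSi : ∀ (s : Finset (Fin (n + 1))) (t), t ∉ s → qS (insert t s) = qN t * qS s)
    (s : Finset (Fin (n + 1))) (a : A)
    (h : ∀ t ∈ s, (qN t : A) * a = a * qN t) :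
    (qS s : A) * a = a * qS s := by
  induction s using Finset.induction_on with
  | empty => rw [hqS0]; simp
  | @insert t s ht ih =>
      rw [hqSi s t ht, Units.val_mul, mul_assoc,
        ih (fun u hu => h u (Finset.mem_insert_of_mem hu)), ← mul_assoc,
        h t (Finset.mem_insert_self t s), mul_assoc]

end helpers

/-- q-deformed Cartan–Weyl Jordan–Schwinger generators:
`E_{ij} = q^{−(N_{i+1}+⋯+N_{j−1})} E^J_{ij}` for `i<j`,
`E_{ij} = q^{+(N_{i−1}+⋯+N_{j+1})} E^J_{ij}` for `i>j`, with
`E^J_{ij} = (x_i/x_j)[N_j]`. The unit `qS s` represents `q^{∑_{t∈s} N_t}`. -/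
theorem stmt_7 {A : Type*} [Ring A] (n : ℕ)
    (q : Aˣ) (lamInv : A)
    (x qN : Fin (n + 1) → Aˣ)
    (qS : Finset (Fin (n + 1)) → Aˣ)
    (hq_central : ∀ a : A, (q : A) * a = a * (q : A))
    (hlam_central : ∀ a : A, lamInv * a = a * lamInv)
    (hlam : lamInv * ((q : A) - ((q⁻¹ : Aˣ) : A)) = 1)
    (hxx : ∀ i j, (x i : A) * (x j : A) = (x j : A) * (x i : A))
    (hNN : ∀ i j, (qN i : A) * (qN j : A) = (qN j : A) * (qN i : A))
    (hNx : ∀ i j, (qN i : A) * (x j : A)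
      = (if i = j then (q : A) else 1) * ((x j : A) * (qN i : A)))
    (hqS0 : qS ∅ = 1)
    (hqSi : ∀ (s : Finset (Fin (n + 1))) (t), t ∉ s → qS (insert t s) = qN t * qS s)
    (EJ E : Fin (n + 1) → Fin (n + 1) → A)
    (hEJ : ∀ i j, EJ i j
      = (x i : A) * (((x j)⁻¹ : Aˣ) : A)
          * (lamInv * ((qN j : A) - (((qN j)⁻¹ : Aˣ) : A))))
    (hElt : ∀ i j, i < j →
      E i j = (((qS (Finset.Ioo i j))⁻¹ : Aˣ) : A) * EJ i j)
    (hEgt : ∀ i j, j < i →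
      E i j = ((qS (Finset.Ioo j i) : Aˣ) : A) * EJ i j)
    (i i1 j : Fin (n + 1)) (hi1 : (i1 : ℕ) = (i : ℕ) + 1) (hij : (i : ℕ) + 1 < (j : ℕ)) :
    E i1 i * E i j - E i j * E i1 i
      = E i1 j * ((qN i : A) * (((qN i1)⁻¹ : Aˣ) : A)) := by
  -- index facts
  have hii1 : i ≠ i1 := by intro h; rw [h] at hi1; omega
  have hi1i : i1 ≠ i := hii1.symm
  have hineqj : i ≠ j := by intro h; rw [h] at hij; omega
  have hjnei : j ≠ i := hineqj.symm
  have hi1j : i1 ≠ j := by intro h; rw [h] at hi1; omega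
  have hji1 : j ≠ i1 := hi1j.symm
  have hlt1 : i < i1 := by rw [Fin.lt_def]; omega
  have hltij : i < j := by rw [Fin.lt_def]; omega
  have hlti1j : i1 < j := by rw [Fin.lt_def]; omega
  have hIoo0 : Finset.Ioo i i1 = ∅ := by
    ext t; simp only [Finset.mem_Ioo, Finset.notMem_empty, iff_false, not_and, Fin.lt_def]
    omega
  have hIoo : Finset.Ioo i j = insert i1 (Finset.Ioo i1 j) := by
    ext t
    simp only [Finset.mem_Ioo, Finset.mem_insert, Fin.lt_def, Fin.ext_iff]
    omega
  have hnm : i1 ∉ Finset.Ioo i1 j := by simp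
  -- commutators with x, base
  have cNx : ∀ t m : Fin (n+1), t ≠ m → (qN t : A) * (x m : A) = (x m : A) * (qN t : A) := by
    intro t m h
    have := hNx t m
    rwa [if_neg h, one_mul] at this
  have qNix : (qN i : A) * (x i : A) = (q : A) * ((x i : A) * (qN i : A)) := by
    have := hNx i i; rwa [if_pos rfl] at this
  have qNi1x : (qN i1 : A) * (x i1 : A) = (q : A) * ((x i1 : A) * (qN i1 : A)) := by
    have := hNx i1 i1; rwa [if_pos rfl] at this
  -- q⁻¹ centrality
  have c_qi : ∀ a : A, ((q⁻¹ : Aˣ) : A) * a = a * ((q⁻¹ : Aˣ) : A) :=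
    fun a => inv_comm_of q a (hq_central a)
  -- qS (Ioo i1 j) commutations
  have hS : ∀ a : A, (∀ t ∈ Finset.Ioo i1 j, (qN t : A) * a = a * qN t) →
      ((qS (Finset.Ioo i1 j) : Aˣ) : A) * a = a * (qS (Finset.Ioo i1 j) : Aˣ) :=
    fun a h => qS_comm_aux qN qS hqS0 hqSi _ a h
  have memne : ∀ t ∈ Finset.Ioo i1 j, t ≠ i ∧ t ≠ i1 ∧ t ≠ j := by
    intro t ht
    simp only [Finset.mem_Ioo, Fin.lt_def] at ht
    refine ⟨?_, ?_, ?_⟩ <;> (intro h; subst h; omega)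
  have hS_x1 : ((qS (Finset.Ioo i1 j) : Aˣ) : A) * (x i1 : A) = (x i1 : A) * (qS (Finset.Ioo i1 j) : Aˣ) :=
    hS _ (fun t ht => cNx t i1 (memne t ht).2.1)
  have hS_xi : ((qS (Finset.Ioo i1 j) : Aˣ) : A) * (x i : A) = (x i : A) * (qS (Finset.Ioo i1 j) : Aˣ) :=
    hS _ (fun t ht => cNx t i (memne t ht).1)
  have hS_xj : ((qS (Finset.Ioo i1 j) : Aˣ) : A) * (x j : A) = (x j : A) * (qS (Finset.Ioo i1 j) : Aˣ) :=
    hS _ (fun t ht => cNx t j (memne t ht).2.2)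
  have hS_N : ∀ m, ((qS (Finset.Ioo i1 j) : Aˣ) : A) * (qN m : A) = (qN m : A) * (qS (Finset.Ioo i1 j) : Aˣ) :=
    fun m => hS _ (fun t _ => hNN t m)
  have hSi_x1 := inv_comm_of (qS (Finset.Ioo i1 j)) _ hS_x1
  have hSi_xi := inv_comm_of (qS (Finset.Ioo i1 j)) _ hS_xi
  have hSi_xj := inv_comm_of (qS (Finset.Ioo i1 j)) _ hS_xj
  have hSi_N : ∀ m, (((qS (Finset.Ioo i1 j))⁻¹ : Aˣ) : A) * (qN m : A) = (qN m : A) * (((qS (Finset.Ioo i1 j))⁻¹ : Aˣ) : A) :=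
    fun m => inv_comm_of (qS (Finset.Ioo i1 j)) _ (hS_N m)
  -- base comm facts, named cm_a_b : a * b = b * a
  have cm_Qi_L : ((q⁻¹ : Aˣ) : A) * lamInv = lamInv * ((q⁻¹ : Aˣ) : A) := (hlam_central _).symm
  have cm_Qi_Si := c_qi (((qS (Finset.Ioo i1 j))⁻¹ : Aˣ) : A)
  have cm_Qi_K := c_qi (((qN i1)⁻¹ : Aˣ) : A)
  have cm_Qi_X1 := c_qi ((x i1 : Aˣ) : A)
  have cm_Qi_Xv := c_qi (((x i)⁻¹ : Aˣ) : A)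
  have cm_Qi_Xi := c_qi ((x i : Aˣ) : A)
  have cm_Qi_Jv := c_qi (((x j)⁻¹ : Aˣ) : A)
  have cm_Qi_Ni := c_qi ((qN i : Aˣ) : A)
  have cm_Qi_Nv := c_qi (((qN i)⁻¹ : Aˣ) : A)
  have cm_Qi_Nj := c_qi ((qN j : Aˣ) : A)
  have cm_Qi_Mv := c_qi (((qN j)⁻¹ : Aˣ) : A)
  have cm_L_Si := hlam_central (((qS (Finset.Ioo i1 j))⁻¹ : Aˣ) : A)
  have cm_L_K := hlam_central (((qN i1)⁻¹ : Aˣ) : A)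
  have cm_L_X1 := hlam_central ((x i1 : Aˣ) : A)
  have cm_L_Xv := hlam_central (((x i)⁻¹ : Aˣ) : A)
  have cm_L_Xi := hlam_central ((x i : Aˣ) : A)
  have cm_L_Jv := hlam_central (((x j)⁻¹ : Aˣ) : A)
  have cm_L_Ni := hlam_central ((qN i : Aˣ) : A)
  have cm_L_Nv := hlam_central (((qN i)⁻¹ : Aˣ) : A)
  have cm_L_Nj := hlam_central ((qN j : Aˣ) : A)
  have cm_L_Mv := hlam_central (((qN j)⁻¹ : Aˣ) : A)
  have cm_Si_K : (((qS (Finset.Ioo i1 j))⁻¹ : Aˣ) : A) * (((qN i1)⁻¹ : Aˣ) : A) = (((qN i1)⁻¹ : Aˣ) : A) * (((qS (Finset.Ioo i1 j))⁻¹ : Aˣ) : A) :=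
    (inv_comm_of (qN i1) _ ((hSi_N i1).symm)).symm
  have cm_Si_X1 := hSi_x1
  have cm_Si_Xi := hSi_xi
  have cm_Si_Xv : (((qS (Finset.Ioo i1 j))⁻¹ : Aˣ) : A) * (((x i)⁻¹ : Aˣ) : A) = (((x i)⁻¹ : Aˣ) : A) * (((qS (Finset.Ioo i1 j))⁻¹ : Aˣ) : A) :=
    (inv_comm_of (x i) _ hSi_xi.symm).symm
  have cm_Si_Jv : (((qS (Finset.Ioo i1 j))⁻¹ : Aˣ) : A) * (((x j)⁻¹ : Aˣ) : A) = (((x j)⁻¹ : Aˣ) : A) * (((qS (Finset.Ioo i1 j))⁻¹ : Aˣ) : A) :=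
    (inv_comm_of (x j) _ hSi_xj.symm).symm
  have cm_Si_Ni := hSi_N i
  have cm_Si_Nv : (((qS (Finset.Ioo i1 j))⁻¹ : Aˣ) : A) * (((qN i)⁻¹ : Aˣ) : A) = (((qN i)⁻¹ : Aˣ) : A) * (((qS (Finset.Ioo i1 j))⁻¹ : Aˣ) : A) :=
    (inv_comm_of (qN i) _ (hSi_N i).symm).symm
  have cm_Si_Nj := hSi_N j
  have cm_Si_Mv : (((qS (Finset.Ioo i1 j))⁻¹ : Aˣ) : A) * (((qN j)⁻¹ : Aˣ) : A) = (((qN j)⁻¹ : Aˣ) : A) * (((qS (Finset.Ioo i1 j))⁻¹ : Aˣ) : A) :=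
    (inv_comm_of (qN j) _ (hSi_N j).symm).symm
  have cm_K_Xi : (((qN i1)⁻¹ : Aˣ) : A) * ((x i : Aˣ) : A) = ((x i : Aˣ) : A) * (((qN i1)⁻¹ : Aˣ) : A) :=
    inv_comm_of (qN i1) _ (cNx i1 i hi1i)
  have cm_K_Xv : (((qN i1)⁻¹ : Aˣ) : A) * (((x i)⁻¹ : Aˣ) : A) = (((x i)⁻¹ : Aˣ) : A) * (((qN i1)⁻¹ : Aˣ) : A) :=
    (inv_comm_of (x i) _ cm_K_Xi.symm).symm
  have cm_K_Jv : (((qN i1)⁻¹ : Aˣ) : A) * (((x j)⁻¹ : Aˣ) : A) = (((x j)⁻¹ : Aˣ) : A) * (((qN i1)⁻¹ : Aˣ) : A) :=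
    (inv_comm_of (x j) _ (inv_comm_of (qN i1) _ (cNx i1 j hi1j)).symm).symm
  have cm_K_Ni : (((qN i1)⁻¹ : Aˣ) : A) * ((qN i : Aˣ) : A) = ((qN i : Aˣ) : A) * (((qN i1)⁻¹ : Aˣ) : A) :=
    inv_comm_of (qN i1) _ (hNN i1 i)
  have cm_K_Nv : (((qN i1)⁻¹ : Aˣ) : A) * (((qN i)⁻¹ : Aˣ) : A) = (((qN i)⁻¹ : Aˣ) : A) * (((qN i1)⁻¹ : Aˣ) : A) :=
    (inv_comm_of (qN i) _ cm_K_Ni.symm).symm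
  have cm_K_Nj : (((qN i1)⁻¹ : Aˣ) : A) * ((qN j : Aˣ) : A) = ((qN j : Aˣ) : A) * (((qN i1)⁻¹ : Aˣ) : A) :=
    inv_comm_of (qN i1) _ (hNN i1 j)
  have cm_K_Mv : (((qN i1)⁻¹ : Aˣ) : A) * (((qN j)⁻¹ : Aˣ) : A) = (((qN j)⁻¹ : Aˣ) : A) * (((qN i1)⁻¹ : Aˣ) : A) :=
    (inv_comm_of (qN j) _ cm_K_Nj.symm).symm
  have cm_X1_Xv : ((x i1 : Aˣ) : A) * (((x i)⁻¹ : Aˣ) : A) = (((x i)⁻¹ : Aˣ) : A) * ((x i1 : Aˣ) : A) :=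
    (inv_comm_of (x i) _ (hxx i i1)).symm
  have cm_X1_Xi : ((x i1 : Aˣ) : A) * ((x i : Aˣ) : A) = ((x i : Aˣ) : A) * ((x i1 : Aˣ) : A) := hxx i1 i
  have cm_X1_Jv : ((x i1 : Aˣ) : A) * (((x j)⁻¹ : Aˣ) : A) = (((x j)⁻¹ : Aˣ) : A) * ((x i1 : Aˣ) : A) :=
    (inv_comm_of (x j) _ (hxx j i1)).symm
  have cm_X1_Ni : ((x i1 : Aˣ) : A) * ((qN i : Aˣ) : A) = ((qN i : Aˣ) : A) * ((x i1 : Aˣ) : A) :=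
    (cNx i i1 hii1).symm
  have cm_X1_Nv : ((x i1 : Aˣ) : A) * (((qN i)⁻¹ : Aˣ) : A) = (((qN i)⁻¹ : Aˣ) : A) * ((x i1 : Aˣ) : A) :=
    (inv_comm_of (qN i) _ (cNx i i1 hii1)).symm
  have cm_X1_Nj : ((x i1 : Aˣ) : A) * ((qN j : Aˣ) : A) = ((qN j : Aˣ) : A) * ((x i1 : Aˣ) : A) :=
    (cNx j i1 hji1).symm
  have cm_X1_Mv : ((x i1 : Aˣ) : A) * (((qN j)⁻¹ : Aˣ) : A) = (((qN j)⁻¹ : Aˣ) : A) * ((x i1 : Aˣ) : A) :=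
    (inv_comm_of (qN j) _ (cNx j i1 hji1)).symm
  have cm_Xv_Jv : (((x i)⁻¹ : Aˣ) : A) * (((x j)⁻¹ : Aˣ) : A) = (((x j)⁻¹ : Aˣ) : A) * (((x i)⁻¹ : Aˣ) : A) :=
    (inv_comm_of (x j) _ (inv_comm_of (x i) _ (hxx i j)).symm).symm
  have cm_Xv_Nj : (((x i)⁻¹ : Aˣ) : A) * ((qN j : Aˣ) : A) = ((qN j : Aˣ) : A) * (((x i)⁻¹ : Aˣ) : A) :=
    inv_comm_of (x i) _ (cNx j i hjnei).symm
  have cm_Xv_Mv : (((x i)⁻¹ : Aˣ) : A) * (((qN j)⁻¹ : Aˣ) : A) = (((qN j)⁻¹ : Aˣ) : A) * (((x i)⁻¹ : Aˣ) : A) :=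
    inv_comm_of (x i) _ ((inv_comm_of (qN j) _ (cNx j i hjnei)).symm)
  have cm_Xi_Jv : ((x i : Aˣ) : A) * (((x j)⁻¹ : Aˣ) : A) = (((x j)⁻¹ : Aˣ) : A) * ((x i : Aˣ) : A) :=
    (inv_comm_of (x j) _ (hxx j i)).symm
  have cm_Jv_Ni : (((x j)⁻¹ : Aˣ) : A) * ((qN i : Aˣ) : A) = ((qN i : Aˣ) : A) * (((x j)⁻¹ : Aˣ) : A) :=
    inv_comm_of (x j) _ (cNx i j hineqj).symm
  have cm_Jv_Nv : (((x j)⁻¹ : Aˣ) : A) * (((qN i)⁻¹ : Aˣ) : A) = (((qN i)⁻¹ : Aˣ) : A) * (((x j)⁻¹ : Aˣ) : A) :=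
    inv_comm_of (x j) _ ((inv_comm_of (qN i) _ (cNx i j hineqj)).symm)
  have cm_Ni_Nj : ((qN i : Aˣ) : A) * ((qN j : Aˣ) : A) = ((qN j : Aˣ) : A) * ((qN i : Aˣ) : A) := hNN i j
  have cm_Ni_Mv : ((qN i : Aˣ) : A) * (((qN j)⁻¹ : Aˣ) : A) = (((qN j)⁻¹ : Aˣ) : A) * ((qN i : Aˣ) : A) :=
    (inv_comm_of (qN j) _ (hNN j i)).symm
  have cm_Nv_Nj : (((qN i)⁻¹ : Aˣ) : A) * ((qN j : Aˣ) : A) = ((qN j : Aˣ) : A) * (((qN i)⁻¹ : Aˣ) : A) :=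
    inv_comm_of (qN i) _ (hNN i j)
  have cm_Nv_Mv : (((qN i)⁻¹ : Aˣ) : A) * (((qN j)⁻¹ : Aˣ) : A) = (((qN j)⁻¹ : Aˣ) : A) * (((qN i)⁻¹ : Aˣ) : A) :=
    (inv_comm_of (qN j) _ (inv_comm_of (qN i) _ (hNN i j)).symm).symm
  -- q-commutation base facts
  have qm_Xi_Ni : ((qN i : Aˣ) : A) * ((x i : Aˣ) : A) = ((q : A) : A) * (((x i : Aˣ) : A) * ((qN i : Aˣ) : A)) := qNix
  have qm_Xi_Nv : (((qN i)⁻¹ : Aˣ) : A) * ((x i : Aˣ) : A) = ((q⁻¹ : Aˣ) : A) * (((x i : Aˣ) : A) * (((qN i)⁻¹ : Aˣ) : A)) :=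
    inv_qcomm_of (qN i) q _ hq_central qNix
  have qm_K_X1 : ((x i1 : Aˣ) : A) * (((qN i1)⁻¹ : Aˣ) : A) = ((q : A) : A) * ((((qN i1)⁻¹ : Aˣ) : A) * ((x i1 : Aˣ) : A)) := by
    have h2 := inv_qcomm_of (qN i1) q _ hq_central qNi1x
    rw [h2, ← mul_assoc, Units.mul_inv, one_mul]
  -- cancellation lemmas
  have cc1 : ∀ c : A, (((x i)⁻¹ : Aˣ) : A) * (((x i : Aˣ) : A) * c) = c := by
    intro c; rw [← mul_assoc, Units.inv_mul, one_mul]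
  have cc2 : ∀ c : A, ((x i : Aˣ) : A) * ((((x i)⁻¹ : Aˣ) : A) * c) = c := by
    intro c; rw [← mul_assoc, Units.mul_inv, one_mul]
  have cc3 : (((x i)⁻¹ : Aˣ) : A) * ((x i : Aˣ) : A) = 1 := Units.inv_mul _
  have cc4 : ((x i : Aˣ) : A) * (((x i)⁻¹ : Aˣ) : A) = 1 := Units.mul_inv _
  have cq1 : ∀ c : A, ((q : A) : A) * (((q⁻¹ : Aˣ) : A) * c) = c := by
    intro c; rw [← mul_assoc, Units.mul_inv, one_mul]
  have cq2 : ∀ c : A, ((q⁻¹ : Aˣ) : A) * (((q : A) : A) * c) = c := by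
    intro c; rw [← mul_assoc, Units.inv_mul, one_mul]
  have cq3 : ((q : A) : A) * ((q⁻¹ : Aˣ) : A) = 1 := Units.mul_inv _
  have cq4 : ((q⁻¹ : Aˣ) : A) * ((q : A) : A) = 1 := Units.inv_mul _
  have sw_Qi_L : ∀ c : A, lamInv * (((q⁻¹ : Aˣ) : A) * c) = ((q⁻¹ : Aˣ) : A) * (lamInv * c) := swap_of_comm cm_Qi_L
  have tw_Qi_L : lamInv * ((q⁻¹ : Aˣ) : A) = ((q⁻¹ : Aˣ) : A) * lamInv := cm_Qi_L.symm
  have sw_Qi_Si : ∀ c : A, (((qS (Finset.Ioo i1 j))⁻¹ : Aˣ) : A) * (((q⁻¹ : Aˣ) : A) * c) = ((q⁻¹ : Aˣ) : A) * ((((qS (Finset.Ioo i1 j))⁻¹ : Aˣ) : A) * c) := swap_of_comm cm_Qi_Si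
  have tw_Qi_Si : (((qS (Finset.Ioo i1 j))⁻¹ : Aˣ) : A) * ((q⁻¹ : Aˣ) : A) = ((q⁻¹ : Aˣ) : A) * (((qS (Finset.Ioo i1 j))⁻¹ : Aˣ) : A) := cm_Qi_Si.symm
  have sw_Qi_K : ∀ c : A, (((qN i1)⁻¹ : Aˣ) : A) * (((q⁻¹ : Aˣ) : A) * c) = ((q⁻¹ : Aˣ) : A) * ((((qN i1)⁻¹ : Aˣ) : A) * c) := swap_of_comm cm_Qi_K
  have tw_Qi_K : (((qN i1)⁻¹ : Aˣ) : A) * ((q⁻¹ : Aˣ) : A) = ((q⁻¹ : Aˣ) : A) * (((qN i1)⁻¹ : Aˣ) : A) := cm_Qi_K.symm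
  have sw_Qi_X1 : ∀ c : A, ((x i1 : Aˣ) : A) * (((q⁻¹ : Aˣ) : A) * c) = ((q⁻¹ : Aˣ) : A) * (((x i1 : Aˣ) : A) * c) := swap_of_comm cm_Qi_X1
  have tw_Qi_X1 : ((x i1 : Aˣ) : A) * ((q⁻¹ : Aˣ) : A) = ((q⁻¹ : Aˣ) : A) * ((x i1 : Aˣ) : A) := cm_Qi_X1.symm
  have sw_Qi_Xv : ∀ c : A, (((x i)⁻¹ : Aˣ) : A) * (((q⁻¹ : Aˣ) : A) * c) = ((q⁻¹ : Aˣ) : A) * ((((x i)⁻¹ : Aˣ) : A) * c) := swap_of_comm cm_Qi_Xv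
  have tw_Qi_Xv : (((x i)⁻¹ : Aˣ) : A) * ((q⁻¹ : Aˣ) : A) = ((q⁻¹ : Aˣ) : A) * (((x i)⁻¹ : Aˣ) : A) := cm_Qi_Xv.symm
  have sw_Qi_Xi : ∀ c : A, ((x i : Aˣ) : A) * (((q⁻¹ : Aˣ) : A) * c) = ((q⁻¹ : Aˣ) : A) * (((x i : Aˣ) : A) * c) := swap_of_comm cm_Qi_Xi
  have tw_Qi_Xi : ((x i : Aˣ) : A) * ((q⁻¹ : Aˣ) : A) = ((q⁻¹ : Aˣ) : A) * ((x i : Aˣ) : A) := cm_Qi_Xi.symm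
  have sw_Qi_Jv : ∀ c : A, (((x j)⁻¹ : Aˣ) : A) * (((q⁻¹ : Aˣ) : A) * c) = ((q⁻¹ : Aˣ) : A) * ((((x j)⁻¹ : Aˣ) : A) * c) := swap_of_comm cm_Qi_Jv
  have tw_Qi_Jv : (((x j)⁻¹ : Aˣ) : A) * ((q⁻¹ : Aˣ) : A) = ((q⁻¹ : Aˣ) : A) * (((x j)⁻¹ : Aˣ) : A) := cm_Qi_Jv.symm
  have sw_Qi_Ni : ∀ c : A, ((qN i : Aˣ) : A) * (((q⁻¹ : Aˣ) : A) * c) = ((q⁻¹ : Aˣ) : A) * (((qN i : Aˣ) : A) * c) := swap_of_comm cm_Qi_Ni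
  have tw_Qi_Ni : ((qN i : Aˣ) : A) * ((q⁻¹ : Aˣ) : A) = ((q⁻¹ : Aˣ) : A) * ((qN i : Aˣ) : A) := cm_Qi_Ni.symm
  have sw_Qi_Nv : ∀ c : A, (((qN i)⁻¹ : Aˣ) : A) * (((q⁻¹ : Aˣ) : A) * c) = ((q⁻¹ : Aˣ) : A) * ((((qN i)⁻¹ : Aˣ) : A) * c) := swap_of_comm cm_Qi_Nv
  have tw_Qi_Nv : (((qN i)⁻¹ : Aˣ) : A) * ((q⁻¹ : Aˣ) : A) = ((q⁻¹ : Aˣ) : A) * (((qN i)⁻¹ : Aˣ) : A) := cm_Qi_Nv.symm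
  have sw_Qi_Nj : ∀ c : A, ((qN j : Aˣ) : A) * (((q⁻¹ : Aˣ) : A) * c) = ((q⁻¹ : Aˣ) : A) * (((qN j : Aˣ) : A) * c) := swap_of_comm cm_Qi_Nj
  have tw_Qi_Nj : ((qN j : Aˣ) : A) * ((q⁻¹ : Aˣ) : A) = ((q⁻¹ : Aˣ) : A) * ((qN j : Aˣ) : A) := cm_Qi_Nj.symm
  have sw_Qi_Mv : ∀ c : A, (((qN j)⁻¹ : Aˣ) : A) * (((q⁻¹ : Aˣ) : A) * c) = ((q⁻¹ : Aˣ) : A) * ((((qN j)⁻¹ : Aˣ) : A) * c) := swap_of_comm cm_Qi_Mv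
  have tw_Qi_Mv : (((qN j)⁻¹ : Aˣ) : A) * ((q⁻¹ : Aˣ) : A) = ((q⁻¹ : Aˣ) : A) * (((qN j)⁻¹ : Aˣ) : A) := cm_Qi_Mv.symm
  have sw_L_Si : ∀ c : A, (((qS (Finset.Ioo i1 j))⁻¹ : Aˣ) : A) * (lamInv * c) = lamInv * ((((qS (Finset.Ioo i1 j))⁻¹ : Aˣ) : A) * c) := swap_of_comm cm_L_Si
  have tw_L_Si : (((qS (Finset.Ioo i1 j))⁻¹ : Aˣ) : A) * lamInv = lamInv * (((qS (Finset.Ioo i1 j))⁻¹ : Aˣ) : A) := cm_L_Si.symm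
  have sw_L_K : ∀ c : A, (((qN i1)⁻¹ : Aˣ) : A) * (lamInv * c) = lamInv * ((((qN i1)⁻¹ : Aˣ) : A) * c) := swap_of_comm cm_L_K
  have tw_L_K : (((qN i1)⁻¹ : Aˣ) : A) * lamInv = lamInv * (((qN i1)⁻¹ : Aˣ) : A) := cm_L_K.symm
  have sw_L_X1 : ∀ c : A, ((x i1 : Aˣ) : A) * (lamInv * c) = lamInv * (((x i1 : Aˣ) : A) * c) := swap_of_comm cm_L_X1
  have tw_L_X1 : ((x i1 : Aˣ) : A) * lamInv = lamInv * ((x i1 : Aˣ) : A) := cm_L_X1.symm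
  have sw_L_Xv : ∀ c : A, (((x i)⁻¹ : Aˣ) : A) * (lamInv * c) = lamInv * ((((x i)⁻¹ : Aˣ) : A) * c) := swap_of_comm cm_L_Xv
  have tw_L_Xv : (((x i)⁻¹ : Aˣ) : A) * lamInv = lamInv * (((x i)⁻¹ : Aˣ) : A) := cm_L_Xv.symm
  have sw_L_Xi : ∀ c : A, ((x i : Aˣ) : A) * (lamInv * c) = lamInv * (((x i : Aˣ) : A) * c) := swap_of_comm cm_L_Xi
  have tw_L_Xi : ((x i : Aˣ) : A) * lamInv = lamInv * ((x i : Aˣ) : A) := cm_L_Xi.symm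
  have sw_L_Jv : ∀ c : A, (((x j)⁻¹ : Aˣ) : A) * (lamInv * c) = lamInv * ((((x j)⁻¹ : Aˣ) : A) * c) := swap_of_comm cm_L_Jv
  have tw_L_Jv : (((x j)⁻¹ : Aˣ) : A) * lamInv = lamInv * (((x j)⁻¹ : Aˣ) : A) := cm_L_Jv.symm
  have sw_L_Ni : ∀ c : A, ((qN i : Aˣ) : A) * (lamInv * c) = lamInv * (((qN i : Aˣ) : A) * c) := swap_of_comm cm_L_Ni
  have tw_L_Ni : ((qN i : Aˣ) : A) * lamInv = lamInv * ((qN i : Aˣ) : A) := cm_L_Ni.symm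
  have sw_L_Nv : ∀ c : A, (((qN i)⁻¹ : Aˣ) : A) * (lamInv * c) = lamInv * ((((qN i)⁻¹ : Aˣ) : A) * c) := swap_of_comm cm_L_Nv
  have tw_L_Nv : (((qN i)⁻¹ : Aˣ) : A) * lamInv = lamInv * (((qN i)⁻¹ : Aˣ) : A) := cm_L_Nv.symm
  have sw_L_Nj : ∀ c : A, ((qN j : Aˣ) : A) * (lamInv * c) = lamInv * (((qN j : Aˣ) : A) * c) := swap_of_comm cm_L_Nj
  have tw_L_Nj : ((qN j : Aˣ) : A) * lamInv = lamInv * ((qN j : Aˣ) : A) := cm_L_Nj.symm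
  have sw_L_Mv : ∀ c : A, (((qN j)⁻¹ : Aˣ) : A) * (lamInv * c) = lamInv * ((((qN j)⁻¹ : Aˣ) : A) * c) := swap_of_comm cm_L_Mv
  have tw_L_Mv : (((qN j)⁻¹ : Aˣ) : A) * lamInv = lamInv * (((qN j)⁻¹ : Aˣ) : A) := cm_L_Mv.symm
  have sw_Si_K : ∀ c : A, (((qN i1)⁻¹ : Aˣ) : A) * ((((qS (Finset.Ioo i1 j))⁻¹ : Aˣ) : A) * c) = (((qS (Finset.Ioo i1 j))⁻¹ : Aˣ) : A) * ((((qN i1)⁻¹ : Aˣ) : A) * c) := swap_of_comm cm_Si_K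
  have tw_Si_K : (((qN i1)⁻¹ : Aˣ) : A) * (((qS (Finset.Ioo i1 j))⁻¹ : Aˣ) : A) = (((qS (Finset.Ioo i1 j))⁻¹ : Aˣ) : A) * (((qN i1)⁻¹ : Aˣ) : A) := cm_Si_K.symm
  have sw_Si_X1 : ∀ c : A, ((x i1 : Aˣ) : A) * ((((qS (Finset.Ioo i1 j))⁻¹ : Aˣ) : A) * c) = (((qS (Finset.Ioo i1 j))⁻¹ : Aˣ) : A) * (((x i1 : Aˣ) : A) * c) := swap_of_comm cm_Si_X1
  have tw_Si_X1 : ((x i1 : Aˣ) : A) * (((qS (Finset.Ioo i1 j))⁻¹ : Aˣ) : A) = (((qS (Finset.Ioo i1 j))⁻¹ : Aˣ) : A) * ((x i1 : Aˣ) : A) := cm_Si_X1.symm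
  have sw_Si_Xv : ∀ c : A, (((x i)⁻¹ : Aˣ) : A) * ((((qS (Finset.Ioo i1 j))⁻¹ : Aˣ) : A) * c) = (((qS (Finset.Ioo i1 j))⁻¹ : Aˣ) : A) * ((((x i)⁻¹ : Aˣ) : A) * c) := swap_of_comm cm_Si_Xv
  have tw_Si_Xv : (((x i)⁻¹ : Aˣ) : A) * (((qS (Finset.Ioo i1 j))⁻¹ : Aˣ) : A) = (((qS (Finset.Ioo i1 j))⁻¹ : Aˣ) : A) * (((x i)⁻¹ : Aˣ) : A) := cm_Si_Xv.symm
  have sw_Si_Xi : ∀ c : A, ((x i : Aˣ) : A) * ((((qS (Finset.Ioo i1 j))⁻¹ : Aˣ) : A) * c) = (((qS (Finset.Ioo i1 j))⁻¹ : Aˣ) : A) * (((x i : Aˣ) : A) * c) := swap_of_comm cm_Si_Xi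
  have tw_Si_Xi : ((x i : Aˣ) : A) * (((qS (Finset.Ioo i1 j))⁻¹ : Aˣ) : A) = (((qS (Finset.Ioo i1 j))⁻¹ : Aˣ) : A) * ((x i : Aˣ) : A) := cm_Si_Xi.symm
  have sw_Si_Jv : ∀ c : A, (((x j)⁻¹ : Aˣ) : A) * ((((qS (Finset.Ioo i1 j))⁻¹ : Aˣ) : A) * c) = (((qS (Finset.Ioo i1 j))⁻¹ : Aˣ) : A) * ((((x j)⁻¹ : Aˣ) : A) * c) := swap_of_comm cm_Si_Jv
  have tw_Si_Jv : (((x j)⁻¹ : Aˣ) : A) * (((qS (Finset.Ioo i1 j))⁻¹ : Aˣ) : A) = (((qS (Finset.Ioo i1 j))⁻¹ : Aˣ) : A) * (((x j)⁻¹ : Aˣ) : A) := cm_Si_Jv.symm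
  have sw_Si_Ni : ∀ c : A, ((qN i : Aˣ) : A) * ((((qS (Finset.Ioo i1 j))⁻¹ : Aˣ) : A) * c) = (((qS (Finset.Ioo i1 j))⁻¹ : Aˣ) : A) * (((qN i : Aˣ) : A) * c) := swap_of_comm cm_Si_Ni
  have tw_Si_Ni : ((qN i : Aˣ) : A) * (((qS (Finset.Ioo i1 j))⁻¹ : Aˣ) : A) = (((qS (Finset.Ioo i1 j))⁻¹ : Aˣ) : A) * ((qN i : Aˣ) : A) := cm_Si_Ni.symm
  have sw_Si_Nv : ∀ c : A, (((qN i)⁻¹ : Aˣ) : A) * ((((qS (Finset.Ioo i1 j))⁻¹ : Aˣ) : A) * c) = (((qS (Finset.Ioo i1 j))⁻¹ : Aˣ) : A) * ((((qN i)⁻¹ : Aˣ) : A) * c) := swap_of_comm cm_Si_Nv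
  have tw_Si_Nv : (((qN i)⁻¹ : Aˣ) : A) * (((qS (Finset.Ioo i1 j))⁻¹ : Aˣ) : A) = (((qS (Finset.Ioo i1 j))⁻¹ : Aˣ) : A) * (((qN i)⁻¹ : Aˣ) : A) := cm_Si_Nv.symm
  have sw_Si_Nj : ∀ c : A, ((qN j : Aˣ) : A) * ((((qS (Finset.Ioo i1 j))⁻¹ : Aˣ) : A) * c) = (((qS (Finset.Ioo i1 j))⁻¹ : Aˣ) : A) * (((qN j : Aˣ) : A) * c) := swap_of_comm cm_Si_Nj
  have tw_Si_Nj : ((qN j : Aˣ) : A) * (((qS (Finset.Ioo i1 j))⁻¹ : Aˣ) : A) = (((qS (Finset.Ioo i1 j))⁻¹ : Aˣ) : A) * ((qN j : Aˣ) : A) := cm_Si_Nj.symm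
  have sw_Si_Mv : ∀ c : A, (((qN j)⁻¹ : Aˣ) : A) * ((((qS (Finset.Ioo i1 j))⁻¹ : Aˣ) : A) * c) = (((qS (Finset.Ioo i1 j))⁻¹ : Aˣ) : A) * ((((qN j)⁻¹ : Aˣ) : A) * c) := swap_of_comm cm_Si_Mv
  have tw_Si_Mv : (((qN j)⁻¹ : Aˣ) : A) * (((qS (Finset.Ioo i1 j))⁻¹ : Aˣ) : A) = (((qS (Finset.Ioo i1 j))⁻¹ : Aˣ) : A) * (((qN j)⁻¹ : Aˣ) : A) := cm_Si_Mv.symm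
  have sw_K_Xv : ∀ c : A, (((x i)⁻¹ : Aˣ) : A) * ((((qN i1)⁻¹ : Aˣ) : A) * c) = (((qN i1)⁻¹ : Aˣ) : A) * ((((x i)⁻¹ : Aˣ) : A) * c) := swap_of_comm cm_K_Xv
  have tw_K_Xv : (((x i)⁻¹ : Aˣ) : A) * (((qN i1)⁻¹ : Aˣ) : A) = (((qN i1)⁻¹ : Aˣ) : A) * (((x i)⁻¹ : Aˣ) : A) := cm_K_Xv.symm
  have sw_K_Xi : ∀ c : A, ((x i : Aˣ) : A) * ((((qN i1)⁻¹ : Aˣ) : A) * c) = (((qN i1)⁻¹ : Aˣ) : A) * (((x i : Aˣ) : A) * c) := swap_of_comm cm_K_Xi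
  have tw_K_Xi : ((x i : Aˣ) : A) * (((qN i1)⁻¹ : Aˣ) : A) = (((qN i1)⁻¹ : Aˣ) : A) * ((x i : Aˣ) : A) := cm_K_Xi.symm
  have sw_K_Jv : ∀ c : A, (((x j)⁻¹ : Aˣ) : A) * ((((qN i1)⁻¹ : Aˣ) : A) * c) = (((qN i1)⁻¹ : Aˣ) : A) * ((((x j)⁻¹ : Aˣ) : A) * c) := swap_of_comm cm_K_Jv
  have tw_K_Jv : (((x j)⁻¹ : Aˣ) : A) * (((qN i1)⁻¹ : Aˣ) : A) = (((qN i1)⁻¹ : Aˣ) : A) * (((x j)⁻¹ : Aˣ) : A) := cm_K_Jv.symm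
  have sw_K_Ni : ∀ c : A, ((qN i : Aˣ) : A) * ((((qN i1)⁻¹ : Aˣ) : A) * c) = (((qN i1)⁻¹ : Aˣ) : A) * (((qN i : Aˣ) : A) * c) := swap_of_comm cm_K_Ni
  have tw_K_Ni : ((qN i : Aˣ) : A) * (((qN i1)⁻¹ : Aˣ) : A) = (((qN i1)⁻¹ : Aˣ) : A) * ((qN i : Aˣ) : A) := cm_K_Ni.symm
  have sw_K_Nv : ∀ c : A, (((qN i)⁻¹ : Aˣ) : A) * ((((qN i1)⁻¹ : Aˣ) : A) * c) = (((qN i1)⁻¹ : Aˣ) : A) * ((((qN i)⁻¹ : Aˣ) : A) * c) := swap_of_comm cm_K_Nv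
  have tw_K_Nv : (((qN i)⁻¹ : Aˣ) : A) * (((qN i1)⁻¹ : Aˣ) : A) = (((qN i1)⁻¹ : Aˣ) : A) * (((qN i)⁻¹ : Aˣ) : A) := cm_K_Nv.symm
  have sw_K_Nj : ∀ c : A, ((qN j : Aˣ) : A) * ((((qN i1)⁻¹ : Aˣ) : A) * c) = (((qN i1)⁻¹ : Aˣ) : A) * (((qN j : Aˣ) : A) * c) := swap_of_comm cm_K_Nj
  have tw_K_Nj : ((qN j : Aˣ) : A) * (((qN i1)⁻¹ : Aˣ) : A) = (((qN i1)⁻¹ : Aˣ) : A) * ((qN j : Aˣ) : A) := cm_K_Nj.symm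
  have sw_K_Mv : ∀ c : A, (((qN j)⁻¹ : Aˣ) : A) * ((((qN i1)⁻¹ : Aˣ) : A) * c) = (((qN i1)⁻¹ : Aˣ) : A) * ((((qN j)⁻¹ : Aˣ) : A) * c) := swap_of_comm cm_K_Mv
  have tw_K_Mv : (((qN j)⁻¹ : Aˣ) : A) * (((qN i1)⁻¹ : Aˣ) : A) = (((qN i1)⁻¹ : Aˣ) : A) * (((qN j)⁻¹ : Aˣ) : A) := cm_K_Mv.symm
  have sw_X1_Xv : ∀ c : A, (((x i)⁻¹ : Aˣ) : A) * (((x i1 : Aˣ) : A) * c) = ((x i1 : Aˣ) : A) * ((((x i)⁻¹ : Aˣ) : A) * c) := swap_of_comm cm_X1_Xv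
  have tw_X1_Xv : (((x i)⁻¹ : Aˣ) : A) * ((x i1 : Aˣ) : A) = ((x i1 : Aˣ) : A) * (((x i)⁻¹ : Aˣ) : A) := cm_X1_Xv.symm
  have sw_X1_Xi : ∀ c : A, ((x i : Aˣ) : A) * (((x i1 : Aˣ) : A) * c) = ((x i1 : Aˣ) : A) * (((x i : Aˣ) : A) * c) := swap_of_comm cm_X1_Xi
  have tw_X1_Xi : ((x i : Aˣ) : A) * ((x i1 : Aˣ) : A) = ((x i1 : Aˣ) : A) * ((x i : Aˣ) : A) := cm_X1_Xi.symm
  have sw_X1_Jv : ∀ c : A, (((x j)⁻¹ : Aˣ) : A) * (((x i1 : Aˣ) : A) * c) = ((x i1 : Aˣ) : A) * ((((x j)⁻¹ : Aˣ) : A) * c) := swap_of_comm cm_X1_Jv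
  have tw_X1_Jv : (((x j)⁻¹ : Aˣ) : A) * ((x i1 : Aˣ) : A) = ((x i1 : Aˣ) : A) * (((x j)⁻¹ : Aˣ) : A) := cm_X1_Jv.symm
  have sw_X1_Ni : ∀ c : A, ((qN i : Aˣ) : A) * (((x i1 : Aˣ) : A) * c) = ((x i1 : Aˣ) : A) * (((qN i : Aˣ) : A) * c) := swap_of_comm cm_X1_Ni
  have tw_X1_Ni : ((qN i : Aˣ) : A) * ((x i1 : Aˣ) : A) = ((x i1 : Aˣ) : A) * ((qN i : Aˣ) : A) := cm_X1_Ni.symm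
  have sw_X1_Nv : ∀ c : A, (((qN i)⁻¹ : Aˣ) : A) * (((x i1 : Aˣ) : A) * c) = ((x i1 : Aˣ) : A) * ((((qN i)⁻¹ : Aˣ) : A) * c) := swap_of_comm cm_X1_Nv
  have tw_X1_Nv : (((qN i)⁻¹ : Aˣ) : A) * ((x i1 : Aˣ) : A) = ((x i1 : Aˣ) : A) * (((qN i)⁻¹ : Aˣ) : A) := cm_X1_Nv.symm
  have sw_X1_Nj : ∀ c : A, ((qN j : Aˣ) : A) * (((x i1 : Aˣ) : A) * c) = ((x i1 : Aˣ) : A) * (((qN j : Aˣ) : A) * c) := swap_of_comm cm_X1_Nj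
  have tw_X1_Nj : ((qN j : Aˣ) : A) * ((x i1 : Aˣ) : A) = ((x i1 : Aˣ) : A) * ((qN j : Aˣ) : A) := cm_X1_Nj.symm
  have sw_X1_Mv : ∀ c : A, (((qN j)⁻¹ : Aˣ) : A) * (((x i1 : Aˣ) : A) * c) = ((x i1 : Aˣ) : A) * ((((qN j)⁻¹ : Aˣ) : A) * c) := swap_of_comm cm_X1_Mv
  have tw_X1_Mv : (((qN j)⁻¹ : Aˣ) : A) * ((x i1 : Aˣ) : A) = ((x i1 : Aˣ) : A) * (((qN j)⁻¹ : Aˣ) : A) := cm_X1_Mv.symm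
  have sw_Xv_Jv : ∀ c : A, (((x j)⁻¹ : Aˣ) : A) * ((((x i)⁻¹ : Aˣ) : A) * c) = (((x i)⁻¹ : Aˣ) : A) * ((((x j)⁻¹ : Aˣ) : A) * c) := swap_of_comm cm_Xv_Jv
  have tw_Xv_Jv : (((x j)⁻¹ : Aˣ) : A) * (((x i)⁻¹ : Aˣ) : A) = (((x i)⁻¹ : Aˣ) : A) * (((x j)⁻¹ : Aˣ) : A) := cm_Xv_Jv.symm
  have sw_Xv_Nj : ∀ c : A, ((qN j : Aˣ) : A) * ((((x i)⁻¹ : Aˣ) : A) * c) = (((x i)⁻¹ : Aˣ) : A) * (((qN j : Aˣ) : A) * c) := swap_of_comm cm_Xv_Nj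
  have tw_Xv_Nj : ((qN j : Aˣ) : A) * (((x i)⁻¹ : Aˣ) : A) = (((x i)⁻¹ : Aˣ) : A) * ((qN j : Aˣ) : A) := cm_Xv_Nj.symm
  have sw_Xv_Mv : ∀ c : A, (((qN j)⁻¹ : Aˣ) : A) * ((((x i)⁻¹ : Aˣ) : A) * c) = (((x i)⁻¹ : Aˣ) : A) * ((((qN j)⁻¹ : Aˣ) : A) * c) := swap_of_comm cm_Xv_Mv
  have tw_Xv_Mv : (((qN j)⁻¹ : Aˣ) : A) * (((x i)⁻¹ : Aˣ) : A) = (((x i)⁻¹ : Aˣ) : A) * (((qN j)⁻¹ : Aˣ) : A) := cm_Xv_Mv.symm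
  have sw_Xi_Jv : ∀ c : A, (((x j)⁻¹ : Aˣ) : A) * (((x i : Aˣ) : A) * c) = ((x i : Aˣ) : A) * ((((x j)⁻¹ : Aˣ) : A) * c) := swap_of_comm cm_Xi_Jv
  have tw_Xi_Jv : (((x j)⁻¹ : Aˣ) : A) * ((x i : Aˣ) : A) = ((x i : Aˣ) : A) * (((x j)⁻¹ : Aˣ) : A) := cm_Xi_Jv.symm
  have sw_Jv_Ni : ∀ c : A, ((qN i : Aˣ) : A) * ((((x j)⁻¹ : Aˣ) : A) * c) = (((x j)⁻¹ : Aˣ) : A) * (((qN i : Aˣ) : A) * c) := swap_of_comm cm_Jv_Ni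
  have tw_Jv_Ni : ((qN i : Aˣ) : A) * (((x j)⁻¹ : Aˣ) : A) = (((x j)⁻¹ : Aˣ) : A) * ((qN i : Aˣ) : A) := cm_Jv_Ni.symm
  have sw_Jv_Nv : ∀ c : A, (((qN i)⁻¹ : Aˣ) : A) * ((((x j)⁻¹ : Aˣ) : A) * c) = (((x j)⁻¹ : Aˣ) : A) * ((((qN i)⁻¹ : Aˣ) : A) * c) := swap_of_comm cm_Jv_Nv
  have tw_Jv_Nv : (((qN i)⁻¹ : Aˣ) : A) * (((x j)⁻¹ : Aˣ) : A) = (((x j)⁻¹ : Aˣ) : A) * (((qN i)⁻¹ : Aˣ) : A) := cm_Jv_Nv.symm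
  have sw_Ni_Nj : ∀ c : A, ((qN j : Aˣ) : A) * (((qN i : Aˣ) : A) * c) = ((qN i : Aˣ) : A) * (((qN j : Aˣ) : A) * c) := swap_of_comm cm_Ni_Nj
  have tw_Ni_Nj : ((qN j : Aˣ) : A) * ((qN i : Aˣ) : A) = ((qN i : Aˣ) : A) * ((qN j : Aˣ) : A) := cm_Ni_Nj.symm
  have sw_Ni_Mv : ∀ c : A, (((qN j)⁻¹ : Aˣ) : A) * (((qN i : Aˣ) : A) * c) = ((qN i : Aˣ) : A) * ((((qN j)⁻¹ : Aˣ) : A) * c) := swap_of_comm cm_Ni_Mv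
  have tw_Ni_Mv : (((qN j)⁻¹ : Aˣ) : A) * ((qN i : Aˣ) : A) = ((qN i : Aˣ) : A) * (((qN j)⁻¹ : Aˣ) : A) := cm_Ni_Mv.symm
  have sw_Nv_Nj : ∀ c : A, ((qN j : Aˣ) : A) * ((((qN i)⁻¹ : Aˣ) : A) * c) = (((qN i)⁻¹ : Aˣ) : A) * (((qN j : Aˣ) : A) * c) := swap_of_comm cm_Nv_Nj
  have tw_Nv_Nj : ((qN j : Aˣ) : A) * (((qN i)⁻¹ : Aˣ) : A) = (((qN i)⁻¹ : Aˣ) : A) * ((qN j : Aˣ) : A) := cm_Nv_Nj.symm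
  have sw_Nv_Mv : ∀ c : A, (((qN j)⁻¹ : Aˣ) : A) * ((((qN i)⁻¹ : Aˣ) : A) * c) = (((qN i)⁻¹ : Aˣ) : A) * ((((qN j)⁻¹ : Aˣ) : A) * c) := swap_of_comm cm_Nv_Mv
  have tw_Nv_Mv : (((qN j)⁻¹ : Aˣ) : A) * (((qN i)⁻¹ : Aˣ) : A) = (((qN i)⁻¹ : Aˣ) : A) * (((qN j)⁻¹ : Aˣ) : A) := cm_Nv_Mv.symm
  have sw_K_X1 : ∀ c : A, ((x i1 : Aˣ) : A) * ((((qN i1)⁻¹ : Aˣ) : A) * c) = ((q : A) : A) * ((((qN i1)⁻¹ : Aˣ) : A) * (((x i1 : Aˣ) : A) * c)) := qswap_of qm_K_X1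
  have tw_K_X1 : ((x i1 : Aˣ) : A) * (((qN i1)⁻¹ : Aˣ) : A) = ((q : A) : A) * ((((qN i1)⁻¹ : Aˣ) : A) * ((x i1 : Aˣ) : A)) := qm_K_X1
  have sw_Xi_Ni : ∀ c : A, ((qN i : Aˣ) : A) * (((x i : Aˣ) : A) * c) = ((q : A) : A) * (((x i : Aˣ) : A) * (((qN i : Aˣ) : A) * c)) := qswap_of qm_Xi_Ni
  have tw_Xi_Ni : ((qN i : Aˣ) : A) * ((x i : Aˣ) : A) = ((q : A) : A) * (((x i : Aˣ) : A) * ((qN i : Aˣ) : A)) := qm_Xi_Ni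
  have sw_Xi_Nv : ∀ c : A, (((qN i)⁻¹ : Aˣ) : A) * (((x i : Aˣ) : A) * c) = ((q⁻¹ : Aˣ) : A) * (((x i : Aˣ) : A) * ((((qN i)⁻¹ : Aˣ) : A) * c)) := qswap_of qm_Xi_Nv
  have tw_Xi_Nv : (((qN i)⁻¹ : Aˣ) : A) * ((x i : Aˣ) : A) = ((q⁻¹ : Aˣ) : A) * (((x i : Aˣ) : A) * (((qN i)⁻¹ : Aˣ) : A)) := qm_Xi_Nv
  -- generic Q mover
  have sw_Q : ∀ a c : A, a * (((q : A) : A) * c) = ((q : A) : A) * (a * c) := fun a c => (swap_of_comm (hq_central a).symm c).symm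
  have tw_Q : ∀ a : A, a * ((q : A) : A) = ((q : A) : A) * a := fun a => (hq_central a).symm
  -- explicit formulas for the three generators involved
  have hEa : E i1 i = ((x i1 : Aˣ) : A) * (((x i)⁻¹ : Aˣ) : A)
      * (lamInv * ((qN i : A) - (((qN i)⁻¹ : Aˣ) : A))) := by
    rw [hEgt i1 i hlt1, hIoo0, hqS0, hEJ, Units.val_one, one_mul]
  have hEb : E i j = (((qS (Finset.Ioo i1 j))⁻¹ : Aˣ) : A) * ((((qN i1)⁻¹ : Aˣ) : A)
      * (((x i : Aˣ) : A) * ((((x j)⁻¹ : Aˣ) : A) * (lamInv * ((qN j : A) - (((qN j)⁻¹ : Aˣ) : A)))))) := by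
    rw [hElt i j hltij, hIoo, hqSi _ _ hnm, mul_inv_rev, hEJ, Units.val_mul]
    simp only [mul_assoc]
  have hEc : E i1 j = (((qS (Finset.Ioo i1 j))⁻¹ : Aˣ) : A) * (((x i1 : Aˣ) : A)
      * ((((x j)⁻¹ : Aˣ) : A) * (lamInv * ((qN j : A) - (((qN j)⁻¹ : Aˣ) : A))))) := by
    rw [hElt i1 j hlti1j, hEJ]
    simp only [mul_assoc]
  rw [hEa, hEb, hEc]
  simp only [mul_sub, sub_mul, mul_assoc]
  simp only [sw_Qi_L, tw_Qi_L, sw_Qi_Si, tw_Qi_Si, sw_Qi_K, tw_Qi_K, sw_Qi_X1, tw_Qi_X1, sw_Qi_Xv, tw_Qi_Xv, sw_Qi_Xi, tw_Qi_Xi, sw_Qi_Jv, tw_Qi_Jv, sw_Qi_Ni, tw_Qi_Ni, sw_Qi_Nv, tw_Qi_Nv, sw_Qi_Nj, tw_Qi_Nj, sw_Qi_Mv, tw_Qi_Mv, sw_L_Si, tw_L_Si, sw_L_K, tw_L_K, sw_L_X1, tw_L_X1, sw_L_Xv, tw_L_Xv, sw_L_Xi, tw_L_Xi, sw_L_Jv,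 tw_L_Jv, sw_L_Ni, tw_L_Ni, sw_L_Nv, tw_L_Nv, sw_L_Nj, tw_L_Nj, sw_L_Mv, tw_L_Mv, sw_Si_K, tw_Si_K, sw_Si_X1, tw_Si_X1, sw_Si_Xv, tw_Si_Xv, sw_Si_Xi, tw_Si_Xi, sw_Si_Jv, tw_Si_Jv, sw_Si_Ni, tw_Si_Ni, sw_Si_Nv, tw_Si_Nv, sw_Si_Nj, tw_Si_Nj, sw_Si_Mv, tw_Si_Mv, sw_K_Xv, tw_K_Xv, sw_K_Xi, tw_K_Xi, sw_K_Jv, tw_K_Jv, sw_K_Ni, tw_K_Ni, sw_K_Nv, tw_K_Nv, sw_K_Nj, tw_K_Nj, sw_K_Mv, tw_K_Mv, sw_X1_Xv, tw_X1_Xv, sw_X1_Xi, tw_X1_Xi, sw_X1_Jv, tw_X1_Jv, sw_X1_Ni, tw_X1_Ni, sw_X1_Nv, tw_X1_Nv, sw_X1_Nj, tw_X1_Nj, sw_X1_Mv, tw_X1_Mv, sw_Xv_Jv, tw_Xv_Jv, sw_Xv_Nj, tw_Xv_Nj, sw_Xv_Mv, tw_Xv_Mv, sw_Xi_Jv, tw_Xi_Jv,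 sw_Jv_Ni, tw_Jv_Ni, sw_Jv_Nv, tw_Jv_Nv, sw_Ni_Nj, tw_Ni_Nj, sw_Ni_Mv, tw_Ni_Mv, sw_Nv_Nj, tw_Nv_Nj, sw_Nv_Mv, tw_Nv_Mv, sw_K_X1, tw_K_X1, sw_Xi_Ni, tw_Xi_Ni, sw_Xi_Nv, tw_Xi_Nv, sw_Q, tw_Q, cc1, cc2, cc3, cc4, cq1, cq2, cq3, cq4, one_mul, mul_one]
  have h1 : lamInv * ((q : A) : A) - lamInv * ((q⁻¹ : Aˣ) : A) = 1 := by
    rw [← mul_sub]; exact hlam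
  have h2 : (lamInv * ((q : A) : A) - lamInv * ((q⁻¹ : Aˣ) : A)) * ((q : A) : A) = ((q : A) : A) := by
    rw [h1, one_mul]
  rw [sub_mul, mul_assoc lamInv (((q⁻¹ : Aˣ)) : A) ((q : A) : A), cq4, mul_one, mul_assoc] at h2
  have h3 : lamInv * (((q : A) : A) * ((q : A) : A)) = ((q : A) : A) + lamInv :=
    eq_add_of_sub_eq h2
  have hkey : ∀ T : A, ((q : A) : A) * (((q : A) : A) * (lamInv * (lamInv * T)))
      = ((q : A) : A) * (lamInv * T) + lamInv * (lamInv * T) := by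
    intro T
    have hswap : ((q : A) : A) * (((q : A) : A) * (lamInv * (lamInv * T)))
        = (lamInv * (((q : A) : A) * ((q : A) : A))) * (lamInv * T) := by
      simp only [mul_assoc, sw_Q]
    rw [hswap, h3, add_mul]
  simp only [hkey]
  abel
end

section
/- Define X_i = q^{−N_{i,n+1}} x_i for i ≤ n, where N_{i,n+1} = ½N_i + N_{i+1} + ⋯ + N_n + ½N_{n+1}, and X_{n+1} = x_{n+1}. Then X_i X_j = q X_j X_i for all n ≥ i > j. -/
/-- With `X_i = q^{−N_{i,n+1}} x_i` for `i ≤ n` (where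
`N_{i,n+1} = ½N_i + N_{i+1} + ⋯ + N_n + ½N_{n+1}`) and `X_{n+1} = x_{n+1}`,
one has `X_i X_j = q X_j X_i` for `n ≥ i > j`.  Here `r i` represents
`q^{N_i/2}`, `s` represents `q^{1/2}`, and `qS t` represents `q^{∑_{u∈t} N_u}`. -/
theorem stmt_8 {A : Type*} [Ring A] (n : ℕ)
    (q s : Aˣ)
    (x r qN : Fin (n + 2) → Aˣ)
    (qS : Finset (Fin (n + 2)) → Aˣ)
    (hq_central : ∀ a : A, (q : A) * a = a * (q : A))
    (hs_central : ∀ a : A, (s : A) * a = a * (s : A))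
    (hs2 : s * s = q)
    (hxx : ∀ i j, (x i : A) * (x j : A) = (x j : A) * (x i : A))
    (hrr : ∀ i j, (r i : A) * (r j : A) = (r j : A) * (r i : A))
    (hr2 : ∀ i, qN i = r i * r i)
    (hrx : ∀ i j, (r i : A) * (x j : A)
      = (if i = j then (s : A) else 1) * ((x j : A) * (r i : A)))
    (hqS0 : qS ∅ = 1)
    (hqSi : ∀ (t : Finset (Fin (n + 2))) (u), u ∉ t → qS (insert u t) = qN u * qS t)
    (X : Fin (n + 2) → A)
    (hXlast : X (Fin.last (n + 1)) = (x (Fin.last (n + 1)) : A))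
    (hX : ∀ i, i ≠ Fin.last (n + 1) →
      X i = (((r i * qS (Finset.Ioo i (Fin.last (n + 1))) * r (Fin.last (n + 1)))⁻¹ : Aˣ) : A)
              * (x i : A))
    (i j : Fin (n + 2)) (hji : j < i) (hi : i ≠ Fin.last (n + 1)) :
    X i * X j = (q : A) * (X j * X i) := by
  set L := Fin.last (n + 1) with hL
  have hilast : i < L := lt_of_le_of_ne (Fin.le_last i) hi
  have hjlast : j ≠ L := ne_of_lt (hji.trans hilast)
  -- centrality helpers
  have hsc : ∀ a b : A, a * ((s : A) * b) = (s : A) * (a * b) := by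
    intro a b; rw [← mul_assoc, ← hs_central, mul_assoc]
  have hqc : ∀ a b : A, a * ((q : A) * b) = (q : A) * (a * b) := by
    intro a b; rw [← mul_assoc, ← hq_central, mul_assoc]
  have hs2' : (s : A) * (s : A) = (q : A) := by
    rw [← Units.val_mul, hs2]
  -- r, x commutation split
  have hrx' : ∀ u v, u ≠ v → (r u : A) * (x v : A) = (x v : A) * (r u : A) := by
    intro u v h; simpa [h] using hrx u v
  have hrx'' : ∀ v, (r v : A) * (x v : A) = (s : A) * ((x v : A) * (r v : A)) := by
    intro v; simpa using hrx v v
  -- qN, x commutation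
  have hqNx : ∀ u v, (qN u : A) * (x v : A)
      = (if u = v then (q : A) else 1) * ((x v : A) * (qN u : A)) := by
    intro u v
    have h1 : (qN u : A) = (r u : A) * (r u : A) := by rw [hr2]; exact Units.val_mul _ _
    by_cases h : u = v
    · subst h
      simp only [if_pos rfl, h1]
      calc (r u : A) * (r u : A) * (x u : A)
          = (r u : A) * ((r u : A) * (x u : A)) := by rw [mul_assoc]
        _ = (r u : A) * ((s : A) * ((x u : A) * (r u : A))) := by rw [hrx'']
        _ = (s : A) * ((r u : A) * ((x u : A) * (r u : A))) := hsc _ _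
        _ = (s : A) * (((r u : A) * (x u : A)) * (r u : A)) := by rw [mul_assoc]
        _ = (s : A) * (((s : A) * ((x u : A) * (r u : A))) * (r u : A)) := by rw [hrx'']
        _ = (s : A) * ((s : A) * (((x u : A) * (r u : A)) * (r u : A))) := by
              rw [mul_assoc ((s : A))]
        _ = ((s : A) * (s : A)) * ((x u : A) * ((r u : A) * (r u : A))) := by
              rw [← mul_assoc, mul_assoc ((x u : A))]
        _ = (q : A) * ((x u : A) * ((r u : A) * (r u : A))) := by rw [hs2']
    · simp only [if_neg h, one_mul, h1]
      rw [mul_assoc, hrx' u v h, ← mul_assoc, hrx' u v h, mul_assoc]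
  -- qS, x commutation
  have hqSx : ∀ t v, (qS t : A) * (x v : A)
      = (if v ∈ t then (q : A) else 1) * ((x v : A) * (qS t : A)) := by
    intro t
    induction t using Finset.induction_on with
    | empty => intro v; simp [hqS0]
    | @insert u t hu ih =>
      intro v
      have h1 : (qS (insert u t) : A) = (qN u : A) * (qS t : A) := by
        rw [hqSi t u hu]; exact Units.val_mul _ _
      rw [h1, mul_assoc, ih v]
      by_cases hv : u = v
      · subst hv
        have hvt : u ∉ t := hu
        rw [if_neg hvt, one_mul, ← mul_assoc, hqNx, if_pos rfl,
          if_pos (Finset.mem_insert_self u t), mul_assoc, mul_assoc]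
      · by_cases hvt : v ∈ t
        · rw [if_pos hvt, if_pos (Finset.mem_insert_of_mem hvt), hqc]
          congr 1
          rw [← mul_assoc, hqNx, if_neg hv, one_mul, mul_assoc]
        · have hvm : v ∉ insert u t := by
            intro hm
            rcases Finset.mem_insert.mp hm with h | h
            · exact hv h.symm
            · exact hvt h
          rw [if_neg hvt, if_neg hvm, one_mul, one_mul, ← mul_assoc, hqNx,
            if_neg hv, one_mul, mul_assoc]
  -- commutation of r's and qS's
  have cR : ∀ u v, Commute (r u : A) (r v : A) := fun u v => hrr u v
  have cSR : ∀ t u, Commute (qS t : A) (r u : A) := by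
    intro t
    induction t using Finset.induction_on with
    | empty => intro u; simp [hqS0]
    | @insert w t hw ih =>
      intro u
      have h1 : (qS (insert w t) : A) = (qN w : A) * (qS t : A) := by
        rw [hqSi t w hw]; exact Units.val_mul _ _
      rw [h1]
      have h2 : Commute (qN w : A) (r u : A) := by
        have h3 : (qN w : A) = (r w : A) * (r w : A) := by rw [hr2]; exact Units.val_mul _ _
        rw [h3]; exact Commute.mul_left (cR w u) (cR w u)
      exact Commute.mul_left h2 (ih u)
  have cSS : ∀ t t', Commute (qS t : A) (qS t' : A) := by
    intro t t'
    induction t' using Finset.induction_on with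
    | empty => simp [hqS0]
    | @insert w t' hw ih =>
      have h1 : (qS (insert w t') : A) = (qN w : A) * (qS t' : A) := by
        rw [hqSi t' w hw]; exact Units.val_mul _ _
      rw [h1]
      have h2 : Commute (qS t : A) (qN w : A) := by
        have h3 : (qN w : A) = (r w : A) * (r w : A) := by rw [hr2]; exact Units.val_mul _ _
        rw [h3]; exact Commute.mul_right (cSR t w) (cSR t w)
      exact Commute.mul_right h2 ih
  -- the two "denominator" units
  set a : Aˣ := r i * qS (Finset.Ioo i L) * r L with ha
  set b : Aˣ := r j * qS (Finset.Ioo j L) * r L with hb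
  have haA : (a : A) = (r i : A) * (qS (Finset.Ioo i L) : A) * (r L : A) := by
    simp [ha, Units.val_mul]
  have hbA : (b : A) = (r j : A) * (qS (Finset.Ioo j L) : A) * (r L : A) := by
    simp [hb, Units.val_mul]
  -- a commutes with x j
  have haxj : Commute (a : A) (x j : A) := by
    rw [haA]
    have h1 : Commute (r i : A) (x j : A) := (hrx' i j (ne_of_gt hji))
    have h2 : Commute (qS (Finset.Ioo i L) : A) (x j : A) := by
      have hnm : j ∉ Finset.Ioo i L := by
        simp only [Finset.mem_Ioo, not_and]
        intro h; exact absurd h (not_lt.mpr hji.le)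
      have := hqSx (Finset.Ioo i L) j
      rw [if_neg hnm, one_mul] at this
      exact this
    have h3 : Commute (r L : A) (x j : A) := hrx' L j (Ne.symm hjlast)
    exact Commute.mul_left (Commute.mul_left h1 h2) h3
  -- b q-commutes with x i
  have hbxi : (b : A) * (x i : A) = (q : A) * ((x i : A) * (b : A)) := by
    rw [hbA]
    have hmem : i ∈ Finset.Ioo j L := Finset.mem_Ioo.mpr ⟨hji, hilast⟩
    have h2 := hqSx (Finset.Ioo j L) i
    rw [if_pos hmem] at h2
    calc (r j : A) * (qS (Finset.Ioo j L) : A) * (r L : A) * (x i : A)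
        = (r j : A) * (qS (Finset.Ioo j L) : A) * ((r L : A) * (x i : A)) := by
          rw [mul_assoc]
      _ = (r j : A) * (qS (Finset.Ioo j L) : A) * ((x i : A) * (r L : A)) := by
          rw [hrx' L i (Ne.symm hi)]
      _ = (r j : A) * ((qS (Finset.Ioo j L) : A) * (x i : A)) * (r L : A) := by
          rw [mul_assoc, mul_assoc, mul_assoc]
      _ = (r j : A) * ((q : A) * ((x i : A) * (qS (Finset.Ioo j L) : A))) * (r L : A) := by
          rw [h2]
      _ = (q : A) * ((r j : A) * ((x i : A) * (qS (Finset.Ioo j L) : A))) * (r L : A) := by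
          rw [hqc]
      _ = (q : A) * (((r j : A) * (x i : A)) * (qS (Finset.Ioo j L) : A)) * (r L : A) := by
          rw [mul_assoc ((r j : A))]
      _ = (q : A) * (((x i : A) * (r j : A)) * (qS (Finset.Ioo j L) : A)) * (r L : A) := by
          rw [hrx' j i (ne_of_lt hji)]
      _ = (q : A) * ((x i : A) * ((r j : A) * (qS (Finset.Ioo j L) : A) * (r L : A))) := by
          rw [mul_assoc, mul_assoc, mul_assoc, mul_assoc]
  -- a commutes with b
  have hab : Commute (a : A) (b : A) := by
    rw [haA, hbA]
    have h1 : Commute (r i : A)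
        ((r j : A) * (qS (Finset.Ioo j L) : A) * (r L : A)) :=
      Commute.mul_right (Commute.mul_right (cR i j) (cSR (Finset.Ioo j L) i).symm) (cR i L)
    have h2 : Commute (qS (Finset.Ioo i L) : A)
        ((r j : A) * (qS (Finset.Ioo j L) : A) * (r L : A)) :=
      Commute.mul_right (Commute.mul_right (cSR (Finset.Ioo i L) j)
        (cSS (Finset.Ioo i L) (Finset.Ioo j L))) (cSR (Finset.Ioo i L) L)
    have h3 : Commute (r L : A)
        ((r j : A) * (qS (Finset.Ioo j L) : A) * (r L : A)) :=
      Commute.mul_right (Commute.mul_right (cR L j) (cSR (Finset.Ioo j L) L).symm) (cR L L)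
    exact Commute.mul_left (Commute.mul_left h1 h2) h3
  -- inverse versions
  have hainv : Commute ((a⁻¹ : Aˣ) : A) (x j : A) := haxj.units_inv_left
  have habinv : Commute ((a⁻¹ : Aˣ) : A) ((b⁻¹ : Aˣ) : A) :=
    (hab.units_inv_left).units_inv_right
  have hbinv : (x i : A) * ((b⁻¹ : Aˣ) : A) = (q : A) * (((b⁻¹ : Aˣ) : A) * (x i : A)) := by
    have h := congrArg (fun z => ((b⁻¹ : Aˣ) : A) * z * ((b⁻¹ : Aˣ) : A)) hbxi
    calc (x i : A) * ((b⁻¹ : Aˣ) : A)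
        = ((b⁻¹ : Aˣ) : A) * ((b : A) * (x i : A)) * ((b⁻¹ : Aˣ) : A) := by
          rw [← mul_assoc, Units.inv_mul, one_mul]
      _ = ((b⁻¹ : Aˣ) : A) * ((q : A) * ((x i : A) * (b : A))) * ((b⁻¹ : Aˣ) : A) := by
          rw [hbxi]
      _ = (q : A) * (((b⁻¹ : Aˣ) : A) * (x i : A)) := by
          rw [hqc, mul_assoc, mul_assoc, mul_assoc, Units.mul_inv, mul_one]
  -- assemble
  rw [hX i hi, hX j hjlast]
  rw [← ha, ← hb]
  calc ((a⁻¹ : Aˣ) : A) * (x i : A) * (((b⁻¹ : Aˣ) : A) * (x j : A))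
      = ((a⁻¹ : Aˣ) : A) * ((x i : A) * ((b⁻¹ : Aˣ) : A)) * (x j : A) := by
        rw [mul_assoc, mul_assoc, mul_assoc]
    _ = ((a⁻¹ : Aˣ) : A) * ((q : A) * (((b⁻¹ : Aˣ) : A) * (x i : A))) * (x j : A) := by
        rw [hbinv]
    _ = (q : A) * (((a⁻¹ : Aˣ) : A) * (((b⁻¹ : Aˣ) : A) * ((x i : A) * (x j : A)))) := by
        rw [hqc]; rw [mul_assoc, mul_assoc, mul_assoc]
    _ = (q : A) * (((b⁻¹ : Aˣ) : A) * (x j : A) * (((a⁻¹ : Aˣ) : A) * (x i : A))) := by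
        congr 1
        calc ((a⁻¹ : Aˣ) : A) * (((b⁻¹ : Aˣ) : A) * ((x i : A) * (x j : A)))
            = (((a⁻¹ : Aˣ) : A) * ((b⁻¹ : Aˣ) : A)) * ((x j : A) * (x i : A)) := by
              rw [← mul_assoc, hxx i j]
          _ = (((b⁻¹ : Aˣ) : A) * ((a⁻¹ : Aˣ) : A)) * ((x j : A) * (x i : A)) := by
              rw [habinv.eq]
          _ = ((b⁻¹ : Aˣ) : A) * (((a⁻¹ : Aˣ) : A) * (x j : A)) * (x i : A) := by
              rw [mul_assoc, mul_assoc, mul_assoc]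
          _ = ((b⁻¹ : Aˣ) : A) * ((x j : A) * ((a⁻¹ : Aˣ) : A)) * (x i : A) := by
              rw [hainv.eq]
          _ = ((b⁻¹ : Aˣ) : A) * (x j : A) * (((a⁻¹ : Aˣ) : A) * (x i : A)) := by
              rw [mul_assoc, mul_assoc, mul_assoc]
end
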